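/- arXiv:2010.00970 — 9 statements merged into one kernel-verified Lean document; each statement's English description precedes it below -/
import Mathlib

section
/- Let φ : ℕ → ℝ≥0 be nondecreasing and concave (φ(i+2) - φ(i+1) ≤ φ(i+1) - φ(i) for all i), with φ(0) = 0 and φ(1) = 1. Then for any p ∈ [0,1], the Bernoulli distribution Ber(p) is dominated in the convex order by the Poisson distribution Poi(p); that is, for every convex function f : ℕ → ℝ (extended appropriately), E[f(Ber(p))] ≤ E[f(Poi(p))]. -/
/-!
A discretely convex `f : ℕ → ℝ` lies above its chord through `0` and `1`,
`f k ≥ f 0 + k (f 1 - f 0)`. Averaging this against any law on `ℕ` with mean `p`, such as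
`Poi(p)`, gives `E f ≥ f 0 + p (f 1 - f 0) = E f(Ber(p))`.
-/

open Real

lemma hasSum_poisson_weight (p : ℝ) : HasSum (fun k : ℕ => exp (-p) * p ^ k / k.factorial) 1 := by
  have := (NormedSpace.expSeries_div_hasSum_exp p).mul_left (exp (-p))
  rw [← exp_eq_exp_ℝ, ← exp_add, neg_add_cancel, exp_zero] at this
  simpa only [mul_div_assoc] using this

lemma hasSum_mul_poisson_weight (p : ℝ) :
    HasSum (fun k : ℕ => (k : ℝ) * (exp (-p) * p ^ k / k.factorial)) p := by
  have hshift (n : ℕ) : ((n + 1 : ℕ) : ℝ) * (exp (-p) * p ^ (n + 1) / (n + 1).factorial) =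
      p * (exp (-p) * p ^ n / n.factorial) := by
    rw [Nat.factorial_succ, pow_succ]
    push_cast
    field_simp
  refine (hasSum_nat_add_iff' 1).mp ?_
  simp only [hshift, Finset.sum_range_one, CharP.cast_eq_zero, zero_mul, sub_zero]
  simpa using (hasSum_poisson_weight p).mul_left p

lemma chord_le_of_monotone_sub {f : ℕ → ℝ} (hf : Monotone fun k => f (k + 1) - f k) (k : ℕ) :
    f 0 + k * (f 1 - f 0) ≤ f k := by
  induction k with
  | zero => simp
  | succ k ih =>
    have := hf (Nat.zero_le k)
    push_cast
    linarith

lemma bernoulli_le_tsum_of_hasSum_mean {w f : ℕ → ℝ} {m : ℝ} (hw : ∀ k, 0 ≤ w k)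
    (hmass : HasSum w 1) (hmean : HasSum (fun k : ℕ => (k : ℝ) * w k) m)
    (hf : Monotone fun k => f (k + 1) - f k) (hsum : Summable fun k => w k * f k) :
    (1 - m) * f 0 + m * f 1 ≤ ∑' k, w k * f k := by
  have hchord : HasSum (fun k : ℕ => w k * (f 0 + k * (f 1 - f 0))) ((1 - m) * f 0 + m * f 1) := by
    have hsplit : (fun k : ℕ => w k * (f 0 + k * (f 1 - f 0))) =
        fun k => w k * f 0 + k * w k * (f 1 - f 0) := by
      funext k
      ring
    rw [hsplit, show (1 - m) * f 0 + m * f 1 = 1 * f 0 + m * (f 1 - f 0) by ring]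
    exact (hmass.mul_right (f 0)).add (hmean.mul_right (f 1 - f 0))
  exact hasSum_le (fun k => mul_le_mul_of_nonneg_left (chord_le_of_monotone_sub hf k) (hw k))
    hchord hsum.hasSum

theorem stmt0_general
    (p : ℝ) (hp0 : 0 ≤ p)
    (f : ℕ → ℝ)
    (hconv : ∀ k, f (k + 1) - f k ≤ f (k + 2) - f (k + 1))
    (hsum : Summable fun k : ℕ => Real.exp (-p) * p ^ k / (Nat.factorial k) * f k) :
    (1 - p) * f 0 + p * f 1 ≤
      ∑' k : ℕ, Real.exp (-p) * p ^ k / (Nat.factorial k) * f k :=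
  bernoulli_le_tsum_of_hasSum_mean (fun k => by positivity) (hasSum_poisson_weight p)
    (hasSum_mul_poisson_weight p) (monotone_nat_of_le_succ hconv) hsum

/-- Ber(p) is dominated by Poi(p) in the convex order: for every (discretely)
convex function `f : ℕ → ℝ` whose Poisson expectation exists,
`E[f(Ber(p))] ≤ E[f(Poi(p))]`. -/
theorem stmt0 (φ : ℕ → ℝ) (hφ0 : φ 0 = 0) (hφ1 : φ 1 = 1)
    (hφnn : ∀ k, 0 ≤ φ k) (hφmono : Monotone φ)
    (hφconc : ∀ k, φ (k + 2) - φ (k + 1) ≤ φ (k + 1) - φ k)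
    (p : ℝ) (hp0 : 0 ≤ p) (hp1 : p ≤ 1)
    (f : ℕ → ℝ)
    (hconv : ∀ k, f (k + 1) - f k ≤ f (k + 2) - f (k + 1))
    (hsum : Summable fun k : ℕ => Real.exp (-p) * p ^ k / (Nat.factorial k) * f k) :
    (1 - p) * f 0 + p * f 1 ≤
      ∑' k : ℕ, Real.exp (-p) * p ^ k / (Nat.factorial k) * f k :=
  stmt0_general p hp0 f hconv hsum
end

section
/- For any concave function φ : ℝ≥0 → ℝ and any p ∈ [0,1]^m, E[φ(∑_{i=1}^m Ber(p_i))] ≥ E[φ(Poi(∑_{i=1}^m p_i))], where the Bernoulli random variables Ber(p_i) are independent. -/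
/-!
Restricted to `ℕ`, a concave `φ` has antitone forward difference `Δφ`, so beyond `j` it lies below
the line through its values at `j` and `j + 1`: `φ (j + i) ≤ φ j + i * Δφ j`. Integrating in `i`
against `Po(q)`, whose mean is `q`, gives `E φ(j + Po(q)) ≤ E φ(j + Ber(q))`; integrating in `j`
against `Po(μ)` and using `Po(μ + q) = Po(μ) ∗ Po(q)` trades a Poisson summand for a Bernoulli one.
Induction over the summands, applied to `φ` and to its shift `φ (· + 1)`, finishes the proof.
-/

open MeasureTheory ProbabilityTheory Finset Real
open scoped NNReal

lemma ConcaveOn.antitone_fwdDiff_natCast {φ : ℝ → ℝ} (hφ : ConcaveOn ℝ (Set.Ici 0) φ) :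
    Antitone (fwdDiff 1 fun n : ℕ => φ n) := by
  refine antitone_nat_of_succ_le fun n => ?_
  have h := hφ.slope_anti_adjacent (x := n) (y := n + 1) (z := n + 1 + 1) (by simp)
    (by simp; positivity) (by linarith) (by linarith)
  simpa [fwdDiff] using h

lemma apply_add_le_of_antitone_fwdDiff {f : ℕ → ℝ} (hf : Antitone (fwdDiff 1 f)) (j i : ℕ) :
    f (j + i) ≤ f j + i * fwdDiff 1 f j := by
  induction i with
  | zero => simp
  | succ i ih =>
    have hstep : f (j + (i + 1)) = f (j + i) + fwdDiff 1 f (j + i) := by simp [fwdDiff, add_assoc]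
    rw [hstep]
    push_cast
    linarith [hf (Nat.le_add_right j i)]

lemma hasSum_natCast_mul_poissonMeasure (r : ℝ≥0) :
    HasSum (fun n : ℕ => exp (-r) * r ^ n / n.factorial * n) r := by
  have hshift : (fun n : ℕ => exp (-r) * r ^ (n + 1) / (n + 1).factorial * (n + 1 : ℕ)) =
      fun n => r * (exp (-r) * r ^ n / n.factorial) := by
    ext n
    push_cast [Nat.factorial_succ]
    field_simp
    ring
  rw [← hasSum_nat_add_iff' 1, hshift]
  simpa using (hasSum_one_poissonMeasure r).mul_left (r : ℝ)

lemma integrable_natCast_poissonMeasure (r : ℝ≥0) : Integrable (fun n : ℕ => (n : ℝ)) Po(r) := by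
  rw [integrable_poissonMeasure_iff]
  simpa using (hasSum_natCast_mul_poissonMeasure r).summable

lemma integral_natCast_poissonMeasure (r : ℝ≥0) : ∫ n, (n : ℝ) ∂Po(r) = r := by
  rw [integral_poissonMeasure]
  exact (hasSum_natCast_mul_poissonMeasure r).tsum_eq

lemma poissonMeasure_singleton_ne_zero {r : ℝ≥0} (hr : 0 < r) (n : ℕ) : Po(r) {n} ≠ 0 := by
  rw [poissonMeasure_singleton]
  positivity

lemma MeasureTheory.Integrable.comp_add_right_of_conv {M F : Type*} [AddCommMonoid M]
    [MeasurableSpace M] [MeasurableAdd₂ M] [Countable M] [MeasurableSingletonClass M]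
    [NormedAddCommGroup F] {μ ν : Measure M} [SFinite μ] [SFinite ν] {f : M → F}
    (hf : Integrable f (μ ∗ ν)) {k : M} (hk : ν {k} ≠ 0) : Integrable (fun x => f (x + k)) μ := by
  rw [Measure.conv_comm, integrable_conv_iff .of_discrete] at hf
  simpa only [add_comm k] using ae_iff_of_countable.mp hf.1 k hk

lemma MeasureTheory.Integrable.integral_add_of_conv {M F : Type*} [AddMonoid M]
    [MeasurableSpace M] [MeasurableAdd₂ M] [NormedAddCommGroup F] [NormedSpace ℝ F]
    {μ ν : Measure M} [SFinite ν] {f : M → F} (hf : Integrable f (μ ∗ ν)) :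
    Integrable (fun x => ∫ y, f (x + y) ∂ν) μ :=
  ((integrable_map_measure hf.1 (by fun_prop)).mp hf).integral_prod_left

lemma MeasureTheory.Integrable.comp_add_right_of_poissonMeasure_add {F : Type*}
    [NormedAddCommGroup F] {μ q : ℝ≥0} {f : ℕ → F} (hf : Integrable f Po(μ + q)) (hq : 0 < q)
    (k : ℕ) :
    Integrable (fun n => f (n + k)) Po(μ) := by
  rw [← poissonMeasure_conv_poissonMeasure] at hf
  exact hf.comp_add_right_of_conv (poissonMeasure_singleton_ne_zero hq k)

lemma integral_poissonMeasure_add_le {f : ℕ → ℝ} (hf : Antitone (fwdDiff 1 f)) (μ q : ℝ≥0)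
    (hint : Integrable f Po(μ + q)) :
    ∫ n, f n ∂Po(μ + q) ≤ (1 - q) * ∫ n, f n ∂Po(μ) + q * ∫ n, f (n + 1) ∂Po(μ) := by
  rcases eq_zero_or_pos q with rfl | hq
  · simp
  have hf₀ : Integrable f Po(μ) := by
    simpa using hint.comp_add_right_of_poissonMeasure_add hq 0
  have hf₁ := hint.comp_add_right_of_poissonMeasure_add hq 1
  have hΔ : Integrable (fwdDiff 1 f) Po(μ) := hf₁.sub hf₀
  have hinner : ∀ j : ℕ, Integrable (fun i => f (j + i)) Po(q) →
      ∫ i, f (j + i) ∂Po(q) ≤ f j + q * fwdDiff 1 f j := by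
    intro j hj
    calc ∫ i, f (j + i) ∂Po(q)
        ≤ ∫ i, (f j + i * fwdDiff 1 f j) ∂Po(q) :=
          integral_mono hj ((integrable_const _).add
            ((integrable_natCast_poissonMeasure q).mul_const _))
            (apply_add_le_of_antitone_fwdDiff hf j)
      _ = f j + q * fwdDiff 1 f j := by
          rw [integral_add (integrable_const _) ((integrable_natCast_poissonMeasure q).mul_const _),
            integral_mul_const, integral_natCast_poissonMeasure]
          simp
  rw [← poissonMeasure_conv_poissonMeasure] at hint ⊢
  calc ∫ n, f n ∂(Po(μ) ∗ Po(q))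
      = ∫ j, ∫ i, f (j + i) ∂Po(q) ∂Po(μ) := integral_conv hint
    _ ≤ ∫ j, (f j + q * fwdDiff 1 f j) ∂Po(μ) :=
        integral_mono_ae hint.integral_add_of_conv (hf₀.add (hΔ.const_mul _))
          (((integrable_conv_iff .of_discrete).mp hint).1.mono hinner)
    _ = (1 - q) * ∫ n, f n ∂Po(μ) + q * ∫ n, f (n + 1) ∂Po(μ) := by
        rw [integral_add hf₀ (hΔ.const_mul _), integral_const_mul]
        simp only [fwdDiff]
        rw [integral_sub hf₁ hf₀]
        ring

section Bernoulli

variable {ι : Type*} [DecidableEq ι]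

noncomputable def bernoulliSumExpectation (p : ι → ℝ) (u : Finset ι) (f : ℕ → ℝ) : ℝ :=
  ∑ s ∈ u.powerset, ((∏ i ∈ s, p i) * ∏ i ∈ u \ s, (1 - p i)) * f s.card

@[simp]
lemma bernoulliSumExpectation_empty (p : ι → ℝ) (f : ℕ → ℝ) :
    bernoulliSumExpectation p ∅ f = f 0 := by
  simp [bernoulliSumExpectation]

lemma bernoulliSumExpectation_insert (p : ι → ℝ) {u : Finset ι}
    {a : ι} (ha : a ∉ u) (f : ℕ → ℝ) :
    bernoulliSumExpectation p (insert a u) f =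
      (1 - p a) * bernoulliSumExpectation p u f +
        p a * bernoulliSumExpectation p u (fun n => f (n + 1)) := by
  simp only [bernoulliSumExpectation, sum_powerset_insert ha, mul_sum]
  congr 1 <;> refine sum_congr rfl fun s hs => ?_
  · have has : a ∉ s := fun h => ha (mem_powerset.mp hs h)
    rw [insert_sdiff_of_notMem u has, prod_insert (fun h => ha (mem_sdiff.mp h).1)]
    ring
  · have has : a ∉ s := fun h => ha (mem_powerset.mp hs h)
    rw [insert_sdiff_insert, sdiff_insert_of_notMem ha, prod_insert has, card_insert_of_notMem has]
    ring

lemma integral_poissonMeasure_le_bernoulliSumExpectation (p : ι → ℝ≥0) (u : Finset ι)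
    (hp : ∀ i ∈ u, p i ≤ 1) {f : ℕ → ℝ} (hf : Antitone (fwdDiff 1 f))
    (hint : Integrable f Po(∑ i ∈ u, p i)) :
    ∫ n, f n ∂Po(∑ i ∈ u, p i) ≤ bernoulliSumExpectation (fun i => p i) u f := by
  induction u using Finset.induction_on generalizing f with
  | empty =>
    simp only [sum_empty, integral_poissonMeasure, bernoulliSumExpectation_empty]
    rw [tsum_eq_single 0 fun n hn => by simp [hn]]
    simp
  | @insert a u ha ih =>
    rw [sum_insert ha, add_comm] at hint ⊢
    rw [bernoulliSumExpectation_insert _ ha]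
    have hpu : ∀ i ∈ u, p i ≤ 1 := fun i hi => hp i (mem_insert_of_mem hi)
    rcases eq_zero_or_pos (p a) with hpa | hpa
    · simp only [hpa, add_zero, NNReal.coe_zero, sub_zero, one_mul, zero_mul] at hint ⊢
      exact ih hpu hf hint
    have hshift : Antitone (fwdDiff 1 fun n => f (n + 1)) := by
      intro m n hmn
      simpa [fwdDiff, add_right_comm] using hf (Nat.add_le_add_right hmn 1)
    calc ∫ n, f n ∂Po(∑ i ∈ u, p i + p a)
        ≤ (1 - p a) * ∫ n, f n ∂Po(∑ i ∈ u, p i) + p a * ∫ n, f (n + 1) ∂Po(∑ i ∈ u, p i) :=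
          integral_poissonMeasure_add_le hf _ _ hint
      _ ≤ _ := by
          gcongr
          · linarith [hp a (mem_insert_self a u)]
          · exact ih hpu hf (by simpa using hint.comp_add_right_of_poissonMeasure_add hpa 0)
          · exact ih hpu hshift (hint.comp_add_right_of_poissonMeasure_add hpa 1)

end Bernoulli

/-- For concave `φ` and independent Bernoulli random variables `Ber(p i)`,
`E[φ(∑ i, Ber (p i))] ≥ E[φ(Poi(∑ i, p i))]`. The left-hand side is written as an
explicit sum over the outcomes of the independent Bernoulli vector. -/
theorem stmt1 (m : ℕ) (p : Fin m → ℝ) (hp : ∀ i, p i ∈ Set.Icc (0 : ℝ) 1)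
    (φ : ℝ → ℝ) (hconc : ConcaveOn ℝ (Set.Ici 0) φ)
    (hsum : Summable fun k : ℕ =>
      Real.exp (-(∑ i, p i)) * (∑ i, p i) ^ k / (Nat.factorial k) * φ k) :
    (∑' k : ℕ, Real.exp (-(∑ i, p i)) * (∑ i, p i) ^ k / (Nat.factorial k) * φ k) ≤
      ∑ s ∈ Finset.univ.powerset,
        ((∏ i ∈ s, p i) * ∏ i ∈ sᶜ, (1 - p i)) * φ s.card := by
  set q : Fin m → ℝ≥0 := fun i => ⟨p i, (hp i).1⟩
  have hq : ((∑ i, q i : ℝ≥0) : ℝ) = ∑ i, p i := NNReal.coe_sum ..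
  rw [← hq] at hsum ⊢
  have hint : Integrable (fun n : ℕ => φ n) Po(∑ i, q i) := by
    rw [integrable_poissonMeasure_iff]
    exact hsum.abs.congr fun n => by rw [abs_mul, abs_of_nonneg (by positivity), Real.norm_eq_abs]
  have key := integral_poissonMeasure_le_bernoulliSumExpectation q univ (fun i _ => (hp i).2)
    hconc.antitone_fwdDiff_natCast hint
  simp only [integral_poissonMeasure, smul_eq_mul] at key
  simp only [compl_eq_univ_sdiff]
  exact key
end

section
/- Let φ : ℕ → ℝ≥0 be nondecreasing and concave with φ(0) = 0. Then the function g : ℝ≥0 → ℝ defined by g(x) = E[φ(Poi(x))] = e^{-x} ∑_{k=0}^∞ φ(k) x^k / k! is infinitely differentiable, nondecreasing, and concave. -/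
open Real Set

/-- The basic exponential-type series. -/
private noncomputable def T (ψ : ℕ → ℝ) (x : ℝ) : ℝ :=
  ∑' k : ℕ, ψ k * x ^ k / (Nat.factorial k)

private lemma summable_aux {ψ : ℕ → ℝ} {C : ℝ} (hC0 : 0 ≤ C)
    (hC : ∀ k : ℕ, |ψ k| ≤ C * (k + 1)) (x : ℝ) :
    Summable (fun k : ℕ => ψ k * x ^ k / (Nat.factorial k)) := by
  apply Summable.of_norm_bounded (g := fun k : ℕ => C * ((2 * |x|) ^ k / (Nat.factorial k)))
    ((Real.summable_pow_div_factorial (2 * |x|)).mul_left C)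
  intro k
  have h1 : ((k : ℝ) + 1) ≤ 2 ^ k := by exact_mod_cast Nat.lt_two_pow_self (n := k)
  have h2 : |ψ k| ≤ C * 2 ^ k :=
    le_trans (hC k) (mul_le_mul_of_nonneg_left h1 hC0)
  calc ‖ψ k * x ^ k / (Nat.factorial k : ℝ)‖
      = |ψ k| * |x| ^ k / (Nat.factorial k : ℝ) := by
        rw [Real.norm_eq_abs, abs_div, abs_mul, abs_pow, Nat.abs_cast]
    _ ≤ (C * 2 ^ k) * |x| ^ k / (Nat.factorial k : ℝ) := by
        gcongr
    _ = C * ((2 * |x|) ^ k / (Nat.factorial k : ℝ)) := by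
        rw [mul_pow]; ring

private lemma hasDerivAtT {ψ : ℕ → ℝ} {C : ℝ} (hC0 : 0 ≤ C)
    (hC : ∀ k : ℕ, |ψ k| ≤ C * (k + 1)) (x : ℝ) :
    HasDerivAt (T ψ) (T (fun k => ψ (k + 1)) x) x := by
  set R : ℝ := |x| + 1 with hRdef
  have hR0 : (0 : ℝ) ≤ R := by positivity
  have hR1 : (1 : ℝ) ≤ R := by
    have := abs_nonneg x; simp only [hRdef]; linarith
  have hxR : x ∈ Metric.ball (0 : ℝ) R := by
    simp only [Metric.mem_ball, dist_zero_right, Real.norm_eq_abs, hRdef]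
    linarith
  have hu : Summable (fun k : ℕ => C * ((4 * R) ^ k / (Nat.factorial k : ℝ))) :=
    (Real.summable_pow_div_factorial (4 * R)).mul_left C
  have hder : ∀ n : ℕ, ∀ y ∈ Metric.ball (0 : ℝ) R,
      HasDerivAt (fun z : ℝ => ψ n * z ^ n / (Nat.factorial n : ℝ))
        (ψ n * ((n : ℝ) * y ^ (n - 1)) / (Nat.factorial n : ℝ)) y :=
    fun n y _ => ((hasDerivAt_pow n y).const_mul (ψ n)).div_const _
  have hbound : ∀ n : ℕ, ∀ y ∈ Metric.ball (0 : ℝ) R,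
      ‖ψ n * ((n : ℝ) * y ^ (n - 1)) / (Nat.factorial n : ℝ)‖ ≤
        C * ((4 * R) ^ n / (Nat.factorial n : ℝ)) := by
    intro n y hy
    have hyR : |y| ≤ R := by
      have := Metric.mem_ball.1 hy
      rw [dist_zero_right, Real.norm_eq_abs] at this
      linarith
    have h1 : ((n : ℝ) + 1) * n ≤ 4 ^ n := by
      have h2 : (n + 1) * n ≤ 4 ^ n := by
        calc (n + 1) * n ≤ 2 ^ n * 2 ^ n :=
              Nat.mul_le_mul (Nat.lt_two_pow_self (n := n)) (le_of_lt (Nat.lt_two_pow_self (n := n)))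
          _ = 4 ^ n := by rw [← Nat.mul_pow]
      exact_mod_cast h2
    have hRpow : R ^ (n - 1) ≤ R ^ n := pow_le_pow_right₀ hR1 (Nat.sub_le n 1)
    have hmain : ((n : ℝ) + 1) * n * R ^ (n - 1) ≤ 4 ^ n * R ^ n :=
      mul_le_mul h1 hRpow (pow_nonneg hR0 _) (pow_nonneg (by norm_num) n)
    calc ‖ψ n * ((n : ℝ) * y ^ (n - 1)) / (Nat.factorial n : ℝ)‖
        = |ψ n| * ((n : ℝ) * |y| ^ (n - 1)) / (Nat.factorial n : ℝ) := by
          rw [Real.norm_eq_abs, abs_div, abs_mul, abs_mul, abs_pow, Nat.abs_cast, Nat.abs_cast]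
      _ ≤ (C * ((n : ℝ) + 1)) * ((n : ℝ) * R ^ (n - 1)) / (Nat.factorial n : ℝ) := by
          gcongr <;> first | exact hC n | exact hyR
      _ = C * (((n : ℝ) + 1) * n * R ^ (n - 1)) / (Nat.factorial n : ℝ) := by ring
      _ ≤ C * (4 ^ n * R ^ n) / (Nat.factorial n : ℝ) := by gcongr
      _ = C * ((4 * R) ^ n / (Nat.factorial n : ℝ)) := by rw [mul_pow]; ring
  have key := hasDerivAt_tsum_of_isPreconnected hu Metric.isOpen_ball
    (convex_ball (0 : ℝ) R).isPreconnected hder hbound hxR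
    (summable_aux hC0 hC x) hxR
  have hsumd : Summable (fun n : ℕ => ψ n * ((n : ℝ) * x ^ (n - 1)) / (Nat.factorial n : ℝ)) :=
    Summable.of_norm_bounded hu (fun n => hbound n x hxR)
  have heq : (∑' n : ℕ, ψ n * ((n : ℝ) * x ^ (n - 1)) / (Nat.factorial n : ℝ)) =
      T (fun k => ψ (k + 1)) x := by
    rw [hsumd.tsum_eq_zero_add]
    simp only [Nat.cast_zero, zero_mul, mul_zero, zero_div, zero_add]
    refine tsum_congr fun k => ?_
    have hfac : ((k + 1).factorial : ℝ) = ((k : ℝ) + 1) * (Nat.factorial k : ℝ) := by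
      rw [Nat.factorial_succ]; push_cast; ring
    have hk1 : ((k : ℝ) + 1) ≠ 0 := by positivity
    have hkf : (Nat.factorial k : ℝ) ≠ 0 := by positivity
    rw [Nat.add_sub_cancel, hfac]
    push_cast
    field_simp
  exact heq ▸ key

private lemma T_sub {ψ χ : ℕ → ℝ} {C D : ℝ} (hC0 : 0 ≤ C)
    (hC : ∀ k : ℕ, |ψ k| ≤ C * (k + 1)) (hD0 : 0 ≤ D)
    (hD : ∀ k : ℕ, |χ k| ≤ D * (k + 1)) (x : ℝ) :
    T (fun k => ψ k - χ k) x = T ψ x - T χ x := by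
  unfold T
  rw [← Summable.tsum_sub (summable_aux hC0 hC x) (summable_aux hD0 hD x)]
  exact tsum_congr fun k => by ring

private lemma shift_bound {ψ : ℕ → ℝ} {C : ℝ} (hC0 : 0 ≤ C)
    (hC : ∀ k : ℕ, |ψ k| ≤ C * (k + 1)) :
    ∀ k : ℕ, |ψ (k + 1)| ≤ (2 * C) * (k + 1) := by
  intro k
  have h := hC (k + 1)
  push_cast at h ⊢
  nlinarith [abs_nonneg (ψ (k + 1)), Nat.cast_nonneg (α := ℝ) k]

/-- Derivative of `x ↦ exp (-x) * T ψ x`. -/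
private lemma hasDerivAt_expT {ψ : ℕ → ℝ} {C : ℝ} (hC0 : 0 ≤ C)
    (hC : ∀ k : ℕ, |ψ k| ≤ C * (k + 1)) (x : ℝ) :
    HasDerivAt (fun x : ℝ => Real.exp (-x) * T ψ x)
      (Real.exp (-x) * T (fun k => ψ (k + 1) - ψ k) x) x := by
  have he : HasDerivAt (fun x : ℝ => Real.exp (-x)) (Real.exp (-x) * (-1)) x :=
    (hasDerivAt_id x).neg.exp
  have hT := hasDerivAtT hC0 hC x
  have hmul : HasDerivAt (fun x : ℝ => Real.exp (-x) * T ψ x) _ x := he.mul hT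
  have hsub := T_sub (C := 2 * C) (D := C) (by linarith) (shift_bound hC0 hC) hC0 hC x
  rw [hsub]
  convert hmul using 1
  ring

/-- Smoothness (in fact analyticity) of `T ψ`. -/
private lemma contDiff_T {ψ : ℕ → ℝ} {C : ℝ} (hC0 : 0 ≤ C)
    (hC : ∀ k : ℕ, |ψ k| ≤ C * (k + 1)) :
    ContDiff ℝ (⊤ : ℕ∞) (T ψ) := by
  set c : ℕ → ℝ := fun k => ψ k / (Nat.factorial k) with hc
  set p := FormalMultilinearSeries.ofScalars ℝ c with hp
  have hrad : p.radius = ⊤ := by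
    apply FormalMultilinearSeries.radius_eq_top_of_summable_norm
    intro r
    have hs : Summable (fun k : ℕ => |ψ k| * (r : ℝ) ^ k / (Nat.factorial k)) := by
      have hC' : ∀ k : ℕ, |abs (ψ k)| ≤ C * (k + 1) := fun k => by
        rw [abs_abs]; exact hC k
      exact summable_aux (ψ := fun k => |ψ k|) hC0 hC' (r : ℝ)
    apply hs.congr
    intro k
    rw [FormalMultilinearSeries.ofScalars_norm]
    simp only [hc, Real.norm_eq_abs, abs_div, Nat.abs_cast]
    rw [div_mul_eq_mul_div]
  have hsum_eq : p.sum = T ψ := by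
    funext x
    unfold FormalMultilinearSeries.sum T
    refine tsum_congr fun k => ?_
    rw [hp, FormalMultilinearSeries.ofScalars_apply_eq]
    simp only [hc, smul_eq_mul]
    rw [div_mul_eq_mul_div]
  have hpb : HasFPowerSeriesOnBall p.sum p 0 p.radius :=
    p.hasFPowerSeriesOnBall (by rw [hrad]; exact ENNReal.zero_lt_top)
  have hA : AnalyticOnNhd ℝ (T ψ) univ := by
    intro y _
    rw [← hsum_eq]
    exact hpb.analyticAt_of_mem (by rw [hrad]; simp)
  exact hA.contDiff

/-- For nondecreasing concave `φ : ℕ → ℝ≥0` with `φ 0 = 0`, the function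
`g x = E[φ(Poi x)] = e^{-x} ∑ φ(k) x^k / k!` is infinitely differentiable,
nondecreasing and concave on `[0, ∞)`. -/
theorem stmt2 (φ : ℕ → ℝ) (hφnn : ∀ k, 0 ≤ φ k) (hφ0 : φ 0 = 0)
    (hφmono : Monotone φ)
    (hφconc : ∀ k, φ (k + 2) - φ (k + 1) ≤ φ (k + 1) - φ k) :
    ContDiffOn ℝ (⊤ : ℕ∞)
        (fun x : ℝ => Real.exp (-x) * ∑' k : ℕ, φ k * x ^ k / (Nat.factorial k))
        (Set.Ici 0) ∧
      MonotoneOn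
        (fun x : ℝ => Real.exp (-x) * ∑' k : ℕ, φ k * x ^ k / (Nat.factorial k))
        (Set.Ici 0) ∧
      ConcaveOn ℝ (Set.Ici 0)
        (fun x : ℝ => Real.exp (-x) * ∑' k : ℕ, φ k * x ^ k / (Nat.factorial k)) := by
  have hfun : (fun x : ℝ => Real.exp (-x) * ∑' k : ℕ, φ k * x ^ k / (Nat.factorial k)) =
      (fun x : ℝ => Real.exp (-x) * T φ x) := rfl
  rw [hfun]
  -- linear growth bound for φ
  have hd : ∀ k, φ (k + 1) - φ k ≤ φ 1 := by
    intro k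
    induction k with
    | zero => simp [hφ0]
    | succ n ih => exact le_trans (hφconc n) ih
  have hlin : ∀ k : ℕ, φ k ≤ φ 1 * k := by
    intro k
    induction k with
    | zero => simp [hφ0]
    | succ n ih =>
      have h := hd n
      push_cast
      push_cast at ih
      nlinarith
  set C : ℝ := φ 1 with hCdef
  have hC0 : 0 ≤ C := hφnn 1
  have hC : ∀ k : ℕ, |φ k| ≤ C * (k + 1) := by
    intro k
    rw [abs_of_nonneg (hφnn k)]
    have := hlin k
    nlinarith [Nat.cast_nonneg (α := ℝ) k]
  -- bound for the difference sequence
  have hCΔ0 : (0 : ℝ) ≤ 3 * C := by linarith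
  have hCΔ : ∀ k : ℕ, |φ (k + 1) - φ k| ≤ (3 * C) * (k + 1) := by
    intro k
    have h1 := hC (k + 1)
    have h2 := hC k
    push_cast at h1 h2 ⊢
    calc |φ (k + 1) - φ k| ≤ |φ (k + 1)| + |φ k| := abs_sub _ _
      _ ≤ (3 * C) * (k + 1) := by nlinarith [Nat.cast_nonneg (α := ℝ) k]
  -- first derivative
  have hD1 : ∀ x : ℝ, HasDerivAt (fun x : ℝ => Real.exp (-x) * T φ x)
      (Real.exp (-x) * T (fun k => φ (k + 1) - φ k) x) x :=
    hasDerivAt_expT hC0 hC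
  -- second derivative
  have hD2 : ∀ x : ℝ, HasDerivAt
      (fun x : ℝ => Real.exp (-x) * T (fun k => φ (k + 1) - φ k) x)
      (Real.exp (-x) * T (fun k => (φ (k + 1 + 1) - φ (k + 1)) - (φ (k + 1) - φ k)) x) x :=
    hasDerivAt_expT hCΔ0 hCΔ
  -- smoothness
  have hG : ContDiff ℝ (⊤ : ℕ∞) (fun x : ℝ => Real.exp (-x) * T φ x) :=
    (Real.contDiff_exp.comp contDiff_id.neg).mul (contDiff_T hC0 hC)
  -- sign of first derivative
  have hpos1 : ∀ x : ℝ, 0 ≤ x → 0 ≤ T (fun k => φ (k + 1) - φ k) x := by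
    intro x hx
    refine tsum_nonneg fun k => ?_
    exact div_nonneg (mul_nonneg (sub_nonneg.2 (hφmono (Nat.le_succ k)))
      (pow_nonneg hx k)) (Nat.cast_nonneg _)
  -- sign of second derivative
  have hneg2 : ∀ x : ℝ, 0 ≤ x →
      T (fun k => (φ (k + 1 + 1) - φ (k + 1)) - (φ (k + 1) - φ k)) x ≤ 0 := by
    intro x hx
    refine tsum_nonpos fun k => ?_
    have hnum : (φ (k + 1 + 1) - φ (k + 1)) - (φ (k + 1) - φ k) ≤ 0 := by
      have h := hφconc k
      have : k + 1 + 1 = k + 2 := by omega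
      rw [this]
      linarith
    have hb : (0 : ℝ) ≤ x ^ k / (Nat.factorial k : ℝ) :=
      div_nonneg (pow_nonneg hx k) (Nat.cast_nonneg _)
    calc ((φ (k + 1 + 1) - φ (k + 1)) - (φ (k + 1) - φ k)) * x ^ k / (Nat.factorial k : ℝ)
        = ((φ (k + 1 + 1) - φ (k + 1)) - (φ (k + 1) - φ k)) * (x ^ k / (Nat.factorial k : ℝ)) := by
          ring
      _ ≤ 0 := mul_nonpos_iff.2 (Or.inr ⟨hnum, hb⟩)
  refine ⟨hG.contDiffOn, ?_, ?_⟩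
  · -- MonotoneOn
    apply monotoneOn_of_deriv_nonneg (convex_Ici 0) hG.continuous.continuousOn
    · intro x _
      exact ((hD1 x).differentiableAt).differentiableWithinAt
    · intro x hx
      rw [(hD1 x).deriv]
      have hx0 : (0 : ℝ) ≤ x := by
        rw [interior_Ici] at hx
        exact le_of_lt hx
      exact mul_nonneg (Real.exp_pos _).le (hpos1 x hx0)
  · -- ConcaveOn
    apply concaveOn_of_hasDerivWithinAt2_nonpos (convex_Ici 0)
      (f' := fun x : ℝ => Real.exp (-x) * T (fun k => φ (k + 1) - φ k) x)
      (f'' := fun x : ℝ =>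
        Real.exp (-x) * T (fun k => (φ (k + 1 + 1) - φ (k + 1)) - (φ (k + 1) - φ k)) x)
      hG.continuous.continuousOn
    · intro x _
      exact (hD1 x).hasDerivWithinAt
    · intro x _
      exact (hD2 x).hasDerivWithinAt
    · intro x hx
      have hx0 : (0 : ℝ) ≤ x := by
        rw [interior_Ici] at hx
        exact le_of_lt hx
      exact mul_nonpos_iff.2 (Or.inl ⟨(Real.exp_pos _).le, hneg2 x hx0⟩)
end

section
/- Let φ : ℕ → ℝ≥0 be nondecreasing and concave, and fix q ∈ [0,1]. Then the function g_q : ℕ → ℝ defined by g_q(n) = E[φ(Bin(n,q))] is nondecreasing and concave, i.e. g_q(n+1) ≥ g_q(n) and g_q(n+2) - g_q(n+1) ≤ g_q(n+1) - g_q(n) for all n. -/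
/-!
Adding one more trial turns `Bin(n, q)` into `Bin(n, q) + Bernoulli(q)`, so for any `f`,
`E f(Bin(n+1, q)) - E f(Bin(n, q)) = q · E (Δf)(Bin(n, q))`. Applied to `φ` this gives
`Δg = q · E (Δφ)(Bin(n, q)) ≥ 0`, and applied once more to `Δφ` it gives
`Δ²g = q² · E (Δ²φ)(Bin(n, q)) ≤ 0`.
-/

open Finset fwdDiff

noncomputable def binomialMean (q : ℝ) (f : ℕ → ℝ) (n : ℕ) : ℝ :=
  ∑ k ∈ range (n + 1), f k * n.choose k * q ^ k * (1 - q) ^ (n - k)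

theorem binomialMean_succ (q : ℝ) (f : ℕ → ℝ) (n : ℕ) :
    binomialMean q f (n + 1) = binomialMean q (fun k ↦ (1 - q) * f k + q * f (k + 1)) n := by
  have hfail :
      ∑ k ∈ range (n + 1), f (k + 1) * n.choose (k + 1) * q ^ (k + 1) * (1 - q) ^ (n - k)
        + f 0 * (1 - q) ^ (n + 1)
      = ∑ k ∈ range (n + 1), (1 - q) * f k * n.choose k * q ^ k * (1 - q) ^ (n - k) := by
    rw [sum_range_succ, Nat.choose_succ_self, sum_range_succ']
    simp only [Nat.cast_zero, mul_zero, zero_mul, add_zero, Nat.choose_zero_right, Nat.cast_one,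
      pow_zero, mul_one, Nat.sub_zero, pow_succ]
    congr 1
    · refine sum_congr rfl fun k hk ↦ ?_
      rw [show n - k = n - (k + 1) + 1 by grind, pow_succ]
      ring
    · ring
  have hsuccess : ∑ k ∈ range (n + 1), f (k + 1) * n.choose k * q ^ (k + 1) * (1 - q) ^ (n - k)
      = ∑ k ∈ range (n + 1), q * f (k + 1) * n.choose k * q ^ k * (1 - q) ^ (n - k) :=
    sum_congr rfl fun k _ ↦ by ring
  -- Pascal's rule splits `Bin(n+1, q)` according to the outcome of the last trial.
  rw [binomialMean, sum_range_succ', binomialMean]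
  simp only [Nat.choose_succ_succ', Nat.cast_add, Nat.succ_sub_succ, Nat.choose_zero_right,
    Nat.cast_one, pow_zero, Nat.sub_zero, mul_one]
  simp only [mul_add, add_mul, sum_add_distrib]
  rw [hsuccess, ← hfail]
  ring

theorem binomialMean_succ_sub (q : ℝ) (f : ℕ → ℝ) (n : ℕ) :
    binomialMean q f (n + 1) - binomialMean q f n = q * binomialMean q (Δ_[1] f) n := by
  rw [binomialMean_succ, binomialMean, binomialMean, binomialMean, mul_sum, ← sum_sub_distrib]
  exact sum_congr rfl fun k _ ↦ by rw [fwdDiff]; ring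

theorem binomialMean_mono {q : ℝ} (hq : q ∈ Set.Icc 0 1) {f g : ℕ → ℝ} (hfg : f ≤ g) (n : ℕ) :
    binomialMean q f n ≤ binomialMean q g n := by
  obtain ⟨hq0, hq1⟩ := hq
  have : 0 ≤ 1 - q := sub_nonneg.2 hq1
  exact sum_le_sum fun k _ ↦ by gcongr; exact hfg k

theorem binomialMean_nonneg {q : ℝ} (hq : q ∈ Set.Icc 0 1) {f : ℕ → ℝ} (hf : 0 ≤ f) (n : ℕ) :
    0 ≤ binomialMean q f n := by
  simpa [binomialMean] using binomialMean_mono hq hf n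

theorem binomialMean_nonpos {q : ℝ} (hq : q ∈ Set.Icc 0 1) {f : ℕ → ℝ} (hf : f ≤ 0) (n : ℕ) :
    binomialMean q f n ≤ 0 := by
  simpa [binomialMean] using binomialMean_mono hq hf n

theorem stmt3_general (φ : ℕ → ℝ) (hφmono : Monotone φ)
    (hφconc : ∀ k, φ (k + 2) - φ (k + 1) ≤ φ (k + 1) - φ k)
    (q : ℝ) (hq : q ∈ Set.Icc (0 : ℝ) 1)
    (g : ℕ → ℝ)
    (hg : ∀ n, g n = ∑ k ∈ Finset.range (n + 1),
      φ k * (n.choose k) * q ^ k * (1 - q) ^ (n - k)) :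
    ∀ n : ℕ, g n ≤ g (n + 1) ∧ g (n + 2) - g (n + 1) ≤ g (n + 1) - g n := by
  obtain rfl : g = binomialMean q φ := funext hg
  have hΔ : 0 ≤ Δ_[1] φ := fun k ↦ sub_nonneg.2 (hφmono k.le_succ)
  have hΔΔ : Δ_[1] (Δ_[1] φ) ≤ 0 := fun k ↦ by simpa [fwdDiff, add_assoc] using hφconc k
  intro n
  constructor
  · rw [← sub_nonneg, binomialMean_succ_sub]
    exact mul_nonneg hq.1 (binomialMean_nonneg hq hΔ n)
  · have hΔΔn := mul_nonpos_of_nonneg_of_nonpos hq.1 (binomialMean_nonpos hq hΔΔ n)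
    calc binomialMean q φ (n + 1 + 1) - binomialMean q φ (n + 1)
        = q * (binomialMean q (Δ_[1] φ) n + q * binomialMean q (Δ_[1] (Δ_[1] φ)) n) := by
          rw [binomialMean_succ_sub, ← binomialMean_succ_sub q (Δ_[1] φ) n]; ring
      _ ≤ q * binomialMean q (Δ_[1] φ) n :=
          mul_le_mul_of_nonneg_left (add_le_of_nonpos_right hΔΔn) hq.1
      _ = binomialMean q φ (n + 1) - binomialMean q φ n := (binomialMean_succ_sub q φ n).symm

/-- For nondecreasing concave `φ : ℕ → ℝ≥0` and `q ∈ [0,1]`, the function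
`g_q(n) = E[φ(Bin(n,q))]` is nondecreasing and concave in `n`. -/
theorem stmt3 (φ : ℕ → ℝ) (hφnn : ∀ k, 0 ≤ φ k) (hφmono : Monotone φ)
    (hφconc : ∀ k, φ (k + 2) - φ (k + 1) ≤ φ (k + 1) - φ k)
    (q : ℝ) (hq : q ∈ Set.Icc (0 : ℝ) 1)
    (g : ℕ → ℝ)
    (hg : ∀ n, g n = ∑ k ∈ Finset.range (n + 1),
      φ k * (n.choose k) * q ^ k * (1 - q) ^ (n - k)) :
    ∀ n : ℕ, g n ≤ g (n + 1) ∧ g (n + 2) - g (n + 1) ≤ g (n + 1) - g n :=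
  stmt3_general φ hφmono hφconc q hq g hg
end

section
/- Let φ : ℕ → ℝ≥0 be nondecreasing, concave, with φ(0) = 0 and φ(1) = 1, and let φ also denote its piecewise linear extension to ℝ≥0. Define α_φ(x) = E[φ(Poi(x))]/φ(x) for x > 0 and α_φ(0) = 1. Then for all x ∈ ℝ≥0, α_φ(x) ≥ min{α_φ(⌊x⌋), α_φ(⌈x⌉)}. -/
/-- The Poisson expectation `E[φ(Poi x)]`. -/
noncomputable def poiExp (φ : ℕ → ℝ) (x : ℝ) : ℝ :=
  ∑' k : ℕ, Real.exp (-x) * x ^ k / (Nat.factorial k) * φ k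

/-- The piecewise linear extension of `φ : ℕ → ℝ` to `ℝ≥0`. -/
noncomputable def phiExt (φ : ℕ → ℝ) (x : ℝ) : ℝ :=
  φ ⌊x⌋₊ + (x - ⌊x⌋₊) * (φ (⌊x⌋₊ + 1) - φ ⌊x⌋₊)

/-- The Poisson concavity ratio `α_φ(x) = E[φ(Poi x)] / φ(x)`, with `α_φ(0) = 1`. -/
noncomputable def alphaRatio (φ : ℕ → ℝ) (x : ℝ) : ℝ :=
  if x = 0 then 1 else poiExp φ x / phiExt φ x

/-! The map `x ↦ E[φ(Poi x)] = e^{-x} ∑ φ(k) x^k / k!` is concave on `[0, ∞)`: differentiating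
`e^{-x}` times an exponential generating function replaces the sequence by its forward
difference, so the second derivative is `e^{-x} ∑ Δ²φ(k) x^k / k! ≤ 0`. On `[n, n + 1]` the
extension `φ` is affine, so for `r` the smaller of the two endpoint ratios, `r φ(x)` is a convex
combination of `r φ(n) ≤ E[φ(Poi n)]` and `r φ(n + 1) ≤ E[φ(Poi (n + 1))]`, which by concavity is
at most `E[φ(Poi x)]`. -/

section ExponentialGrowth

open scoped Nat

noncomputable def expGenFun (ψ : ℕ → ℝ) (x : ℝ) : ℝ :=
  ∑' k : ℕ, ψ k * x ^ k / k !

variable {ψ : ℕ → ℝ} {C b : ℝ}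

theorem summable_mul_pow_div_factorial (hψ : ∀ k, |ψ k| ≤ C * b ^ k) (x : ℝ) :
    Summable fun k => ψ k * x ^ k / k ! := by
  refine .of_norm_bounded ((Real.summable_pow_div_factorial (b * |x|)).mul_left C) fun k => ?_
  rw [Real.norm_eq_abs, abs_div, Nat.abs_cast, abs_mul, abs_pow]
  calc |ψ k| * |x| ^ k / k ! ≤ C * b ^ k * |x| ^ k / k ! := by gcongr; exact hψ k
    _ = C * ((b * |x|) ^ k / k !) := by ring

theorem abs_succ_le_mul_pow (hψ : ∀ k, |ψ k| ≤ C * b ^ k) (k : ℕ) :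
    |ψ (k + 1)| ≤ C * b * b ^ k := by
  simpa [pow_succ, mul_assoc, mul_comm b] using hψ (k + 1)

theorem abs_succ_sub_le_mul_pow (hψ : ∀ k, |ψ k| ≤ C * b ^ k) (k : ℕ) :
    |ψ (k + 1) - ψ k| ≤ (C * b + C) * b ^ k := by
  calc |ψ (k + 1) - ψ k| ≤ |ψ (k + 1)| + |ψ k| := abs_sub _ _
    _ ≤ C * b * b ^ k + C * b ^ k := add_le_add (abs_succ_le_mul_pow hψ k) (hψ k)
    _ = (C * b + C) * b ^ k := by ring

theorem norm_deriv_term_le (hψ : ∀ k, |ψ k| ≤ C * b ^ k) {R y : ℝ} (hR : 1 ≤ R) (hy : |y| ≤ R)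
    (k : ℕ) : ‖ψ k * (k * y ^ (k - 1)) / (k ! : ℝ)‖ ≤ C * (2 * b * R) ^ k / k ! := by
  have hk : (k : ℝ) ≤ 2 ^ k := by exact_mod_cast Nat.lt_two_pow_self.le
  have hyk : |y| ^ (k - 1) ≤ R ^ k :=
    (pow_le_pow_left₀ (abs_nonneg y) hy _).trans (pow_le_pow_right₀ hR (Nat.sub_le k 1))
  rw [Real.norm_eq_abs, abs_div, Nat.abs_cast, abs_mul, abs_mul, Nat.abs_cast, abs_pow]
  refine div_le_div_of_nonneg_right ?_ (Nat.cast_nonneg _)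
  calc |ψ k| * (k * |y| ^ (k - 1)) ≤ C * b ^ k * (2 ^ k * R ^ k) := by
        gcongr
        · exact (abs_nonneg _).trans (hψ k)
        · exact hψ k
    _ = C * (2 * b * R) ^ k := by ring

theorem hasDerivAt_expGenFun (hψ : ∀ k, |ψ k| ≤ C * b ^ k) (x : ℝ) :
    HasDerivAt (expGenFun ψ) (expGenFun (fun k => ψ (k + 1)) x) x := by
  set R := |x| + 1
  have hR : 1 ≤ R := by simp [R]
  have hmajor : Summable fun k => C * (2 * b * R) ^ k / k ! := by
    simpa only [mul_div_assoc] using (Real.summable_pow_div_factorial _).mul_left C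
  have hderiv := hasDerivAt_tsum_of_isPreconnected hmajor Metric.isOpen_ball
    (convex_ball (0 : ℝ) R).isPreconnected
    (fun k y _ => ((hasDerivAt_pow k y).const_mul (ψ k)).div_const (k ! : ℝ))
    (fun k y hy => norm_deriv_term_le hψ hR (mem_ball_zero_iff.mp hy).le k)
    (Metric.mem_ball_self (by linarith)) (summable_mul_pow_div_factorial hψ 0)
    (show x ∈ Metric.ball 0 R by simp [R])
  have hshift : Summable fun k => ψ k * (k * x ^ (k - 1)) / (k ! : ℝ) :=
    .of_norm_bounded hmajor fun k => norm_deriv_term_le hψ hR (by simp [R]) k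
  suffices h : ∑' k, ψ k * (k * x ^ (k - 1)) / (k ! : ℝ) = expGenFun (fun k => ψ (k + 1)) x by
    rw [← h]; exact hderiv
  rw [hshift.tsum_eq_zero_add]
  simp only [CharP.cast_eq_zero, zero_mul, mul_zero, zero_div, zero_add, add_tsub_cancel_right,
    Nat.factorial_succ, Nat.cast_mul, expGenFun]
  congr 1 with k
  field_simp

theorem poiExp_eq_exp_mul_expGenFun (ψ : ℕ → ℝ) (x : ℝ) :
    poiExp ψ x = Real.exp (-x) * expGenFun ψ x := by
  rw [poiExp, expGenFun, ← tsum_mul_left]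
  exact tsum_congr fun k => by ring

theorem hasDerivAt_poiExp (hψ : ∀ k, |ψ k| ≤ C * b ^ k) (x : ℝ) :
    HasDerivAt (poiExp ψ) (poiExp (fun k => ψ (k + 1) - ψ k) x) x := by
  have hsub : expGenFun (fun k => ψ (k + 1) - ψ k) x
      = expGenFun (fun k => ψ (k + 1)) x - expGenFun ψ x := by
    rw [expGenFun, expGenFun, expGenFun,
      ← (summable_mul_pow_div_factorial (abs_succ_le_mul_pow hψ) x).tsum_sub
        (summable_mul_pow_div_factorial hψ x)]
    exact tsum_congr fun k => by ring
  rw [funext (poiExp_eq_exp_mul_expGenFun ψ), poiExp_eq_exp_mul_expGenFun, hsub]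
  exact ((hasDerivAt_neg x).exp.mul (hasDerivAt_expGenFun hψ x)).congr_deriv (by ring)

end ExponentialGrowth

theorem poiExp_nonpos {ψ : ℕ → ℝ} (hψ : ∀ k, ψ k ≤ 0) {x : ℝ} (hx : 0 ≤ x) :
    poiExp ψ x ≤ 0 :=
  tsum_nonpos fun k => mul_nonpos_of_nonneg_of_nonpos (by positivity) (hψ k)

theorem concaveOn_poiExp {ψ : ℕ → ℝ} {C b : ℝ} (hψ : ∀ k, |ψ k| ≤ C * b ^ k)
    (hconc : ∀ k, ψ (k + 2) - ψ (k + 1) ≤ ψ (k + 1) - ψ k) :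
    ConcaveOn ℝ (Set.Ici 0) (poiExp ψ) := by
  have hd := hasDerivAt_poiExp hψ
  have hd2 := hasDerivAt_poiExp (abs_succ_sub_le_mul_pow hψ)
  refine concaveOn_of_hasDerivWithinAt2_nonpos (convex_Ici 0)
    (fun x _ => (hd x).continuousAt.continuousWithinAt) (fun x _ => (hd x).hasDerivWithinAt)
    (fun x _ => (hd2 x).hasDerivWithinAt) fun x hx => poiExp_nonpos (fun k => ?_) ?_
  · linarith [hconc k]
  · rw [interior_Ici] at hx
    exact hx.le

theorem poiExp_zero (ψ : ℕ → ℝ) : poiExp ψ 0 = ψ 0 := by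
  rw [poiExp, tsum_eq_single 0 fun k hk => by simp [hk]]
  simp

section ConcaveSequence

variable {φ : ℕ → ℝ}

theorem succ_sub_le_one_sub_zero (hconc : ∀ k, φ (k + 2) - φ (k + 1) ≤ φ (k + 1) - φ k)
    (k : ℕ) : φ (k + 1) - φ k ≤ φ 1 - φ 0 := by
  induction k with
  | zero => rfl
  | succ k ih => exact (hconc k).trans ih

theorem le_add_mul_one_sub_zero (hconc : ∀ k, φ (k + 2) - φ (k + 1) ≤ φ (k + 1) - φ k)
    (k : ℕ) : φ k ≤ φ 0 + k * (φ 1 - φ 0) := by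
  induction k with
  | zero => simp
  | succ k ih => push_cast; linarith [succ_sub_le_one_sub_zero hconc k]

theorem abs_le_two_pow_of_concave (hφ0 : φ 0 = 0) (hφ1 : φ 1 = 1) (hmono : Monotone φ)
    (hconc : ∀ k, φ (k + 2) - φ (k + 1) ≤ φ (k + 1) - φ k) (k : ℕ) : |φ k| ≤ 1 * 2 ^ k := by
  have hk : (k : ℝ) ≤ 2 ^ k := by exact_mod_cast Nat.lt_two_pow_self.le
  have := le_add_mul_one_sub_zero hconc k
  rw [hφ0, hφ1] at this
  rw [abs_of_nonneg (hφ0 ▸ hmono k.zero_le)]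
  linarith

end ConcaveSequence

theorem phiExt_natCast (φ : ℕ → ℝ) (n : ℕ) : phiExt φ n = φ n := by
  simp [phiExt]

theorem phiExt_of_floor_eq (φ : ℕ → ℝ) {n : ℕ} {x : ℝ} (h : ⌊x⌋₊ = n) :
    phiExt φ x = (n + 1 - x) * φ n + (x - n) * φ (n + 1) := by
  rw [phiExt, h]
  ring

theorem alphaRatio_natCast_mul {φ : ℕ → ℝ} (hφ0 : φ 0 = 0) {m : ℕ} (hm : m ≠ 0 → φ m ≠ 0) :
    alphaRatio φ m * φ m = poiExp φ m := by
  rcases eq_or_ne m 0 with rfl | hm0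
  · simp [poiExp_zero, hφ0]
  · rw [alphaRatio, if_neg (Nat.cast_ne_zero.mpr hm0), phiExt_natCast,
      div_mul_cancel₀ _ (hm hm0)]

theorem min_alphaRatio_le_of_mem_Ioo {φ : ℕ → ℝ} (hφ0 : φ 0 = 0) (hφ1 : φ 1 = 1)
    (hmono : Monotone φ) (hconc : ∀ k, φ (k + 2) - φ (k + 1) ≤ φ (k + 1) - φ k)
    {n : ℕ} {x : ℝ} (hx : x ∈ Set.Ioo (n : ℝ) (n + 1)) :
    min (alphaRatio φ n) (alphaRatio φ (n + 1 : ℕ)) ≤ alphaRatio φ x := by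
  obtain ⟨hnx, hxn⟩ := hx
  have hnonneg (m : ℕ) : 0 ≤ φ m := hφ0 ▸ hmono m.zero_le
  have hpos (m : ℕ) (hm : m ≠ 0) : φ m ≠ 0 :=
    (zero_lt_one.trans_le (hφ1 ▸ hmono (Nat.one_le_iff_ne_zero.mpr hm))).ne'
  have hphi := phiExt_of_floor_eq φ (Nat.floor_eq_on_Ico n x ⟨hnx.le, hxn⟩)
  have hphi_pos : 0 < phiExt φ x := by
    rw [hphi]
    exact add_pos_of_nonneg_of_pos (mul_nonneg (by linarith) (hnonneg n))
      (mul_pos (by linarith) ((hnonneg _).lt_of_ne (hpos _ n.succ_ne_zero).symm))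
  have hconcave : (n + 1 - x) * poiExp φ n + (x - n) * poiExp φ (n + 1 : ℕ) ≤ poiExp φ x := by
    have hx_eq : (n + 1 - x) * (n : ℝ) + (x - n) * ((n + 1 : ℕ) : ℝ) = x := by push_cast; ring
    have := (concaveOn_poiExp (abs_le_two_pow_of_concave hφ0 hφ1 hmono hconc) hconc).2
      (Set.mem_Ici.2 n.cast_nonneg) (Set.mem_Ici.2 (n + 1).cast_nonneg)
      (by linarith : 0 ≤ (n : ℝ) + 1 - x) (by linarith : 0 ≤ x - n) (by ring)
    simpa only [smul_eq_mul, hx_eq] using this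
  set r := min (alphaRatio φ n) (alphaRatio φ (n + 1 : ℕ))
  have hrn : r * φ n ≤ poiExp φ n := alphaRatio_natCast_mul hφ0 (hpos n) ▸
    mul_le_mul_of_nonneg_right (min_le_left _ _) (hnonneg n)
  have hrn1 : r * φ (n + 1) ≤ poiExp φ (n + 1 : ℕ) := alphaRatio_natCast_mul hφ0 (hpos _) ▸
    mul_le_mul_of_nonneg_right (min_le_right _ _) (hnonneg (n + 1))
  rw [alphaRatio, if_neg (n.cast_nonneg.trans_lt hnx).ne', le_div_iff₀ hphi_pos]
  calc r * phiExt φ x = (n + 1 - x) * (r * φ n) + (x - n) * (r * φ (n + 1)) := by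
        rw [hphi]; ring
    _ ≤ (n + 1 - x) * poiExp φ n + (x - n) * poiExp φ (n + 1 : ℕ) := by gcongr
    _ ≤ poiExp φ x := hconcave

theorem stmt4_general (φ : ℕ → ℝ) (hφ0 : φ 0 = 0) (hφ1 : φ 1 = 1)
    (hφmono : Monotone φ)
    (hφconc : ∀ k, φ (k + 2) - φ (k + 1) ≤ φ (k + 1) - φ k) :
    ∀ x : ℝ, 0 ≤ x →
      min (alphaRatio φ (⌊x⌋₊ : ℝ)) (alphaRatio φ (⌈x⌉₊ : ℝ)) ≤ alphaRatio φ x := by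
  intro x hx
  rcases (Nat.floor_le hx).eq_or_lt with hint | hlt
  · rw [← hint, Nat.floor_natCast, Nat.ceil_natCast, min_self]
  have hceil : ⌈x⌉₊ = ⌊x⌋₊ + 1 :=
    le_antisymm (Nat.ceil_le.mpr (by exact_mod_cast (Nat.lt_floor_add_one x).le))
      (Nat.lt_ceil.mpr hlt)
  rw [hceil]
  exact min_alphaRatio_le_of_mem_Ioo hφ0 hφ1 hφmono hφconc ⟨hlt, Nat.lt_floor_add_one x⟩

/-- For all `x ≥ 0`, `α_φ(x) ≥ min (α_φ(⌊x⌋), α_φ(⌈x⌉))`. -/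
theorem stmt4 (φ : ℕ → ℝ) (hφnn : ∀ k, 0 ≤ φ k) (hφ0 : φ 0 = 0) (hφ1 : φ 1 = 1)
    (hφmono : Monotone φ)
    (hφconc : ∀ k, φ (k + 2) - φ (k + 1) ≤ φ (k + 1) - φ k) :
    ∀ x : ℝ, 0 ≤ x →
      min (alphaRatio φ (⌊x⌋₊ : ℝ)) (alphaRatio φ (⌈x⌉₊ : ℝ)) ≤ alphaRatio φ x :=
  stmt4_general φ hφ0 hφ1 hφmono hφconc
end

section
/- Let φ : ℕ → ℝ≥0 be nondecreasing, concave, normalized (φ(0)=0, φ(1)=1), extended piecewise linearly to ℝ≥0, and let α_φ(x) = E[φ(Poi(x))]/φ(x). Then for every ε > 0 and all x ≥ (6/ε)^4, we have 1 - α_φ(x) ≤ ε. -/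
/-!
Put `δ = ε / 6` and let `m = ⌊x(1 - δ)⌋ + 1` be the least integer above `x(1 - δ)`.
Since `Var Poi(x) = x`, Chebyshev's inequality gives `P(Poi(x) < m) ≤ 1 / (xδ²) ≤ δ²`
as soon as `xδ⁴ ≥ 1`. As `φ` is monotone, `E[φ(Poi x)] ≥ φ(m) P(Poi(x) ≥ m)`; as `φ` is
concave with `φ(0) = 0`, every slope of its piecewise linear extension beyond `m` is at most
`φ(m) / m`, so `φ(x) ≤ x φ(m) / m`. Hence
`α_φ(x) ≥ (m / x)(1 - δ²) ≥ (1 - δ)(1 - δ²) ≥ 1 - 2δ`.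
-/

open Finset Real

/-- Mathlib's `poissonPMFReal`, but with a real parameter, as in `poiExp`. -/
noncomputable def poissonWeight (x : ℝ) (k : ℕ) : ℝ := exp (-x) * x ^ k / Nat.factorial k

section Poisson

variable {x : ℝ}

lemma poissonWeight_nonneg (hx : 0 ≤ x) (k : ℕ) : 0 ≤ poissonWeight x k := by
  unfold poissonWeight; positivity

lemma natCast_succ_mul_poissonWeight_succ (x : ℝ) (k : ℕ) :
    ((k + 1 : ℕ) : ℝ) * poissonWeight x (k + 1) = x * poissonWeight x k := by
  unfold poissonWeight
  rw [Nat.factorial_succ, pow_succ]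
  push_cast
  field_simp

lemma hasSum_poissonWeight (x : ℝ) : HasSum (poissonWeight x) 1 := by
  have h := (NormedSpace.expSeries_div_hasSum_exp x).mul_left (exp (-x))
  rw [← exp_eq_exp_ℝ, ← exp_add, neg_add_cancel, exp_zero] at h
  exact h.congr_fun fun k => mul_div_assoc ..

lemma hasSum_natCast_mul_poissonWeight (x : ℝ) :
    HasSum (fun k : ℕ => (k : ℝ) * poissonWeight x k) x := by
  rw [← hasSum_nat_add_iff' 1, sum_range_one, Nat.cast_zero, zero_mul, sub_zero]
  simpa using ((hasSum_poissonWeight x).mul_left x).congr_fun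
    (natCast_succ_mul_poissonWeight_succ x)

lemma hasSum_natCast_mul_natCast_sub_one_mul_poissonWeight (x : ℝ) :
    HasSum (fun k : ℕ => (k : ℝ) * (k - 1) * poissonWeight x k) (x ^ 2) := by
  have hshift (k : ℕ) : ((k + 2 : ℕ) : ℝ) * ((k + 2 : ℕ) - 1) * poissonWeight x (k + 2) =
      x ^ 2 * poissonWeight x k := by
    have h1 := natCast_succ_mul_poissonWeight_succ x (k + 1)
    have h0 := natCast_succ_mul_poissonWeight_succ x k
    push_cast at h0 h1 ⊢
    linear_combination (k + 1 : ℝ) * h1 + x * h0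
  rw [← hasSum_nat_add_iff' 2]
  simpa [sum_range_succ] using ((hasSum_poissonWeight x).mul_left (x ^ 2)).congr_fun hshift

lemma hasSum_sq_sub_mul_poissonWeight (x : ℝ) :
    HasSum (fun k : ℕ => (x - k) ^ 2 * poissonWeight x k) x := by
  have h := (((hasSum_poissonWeight x).mul_left (x ^ 2)).sub
    ((hasSum_natCast_mul_poissonWeight x).mul_left (2 * x - 1))).add
    (hasSum_natCast_mul_natCast_sub_one_mul_poissonWeight x)
  rw [show x ^ 2 * 1 - (2 * x - 1) * x + x ^ 2 = x by ring] at h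
  exact h.congr_fun fun k => by ring

lemma sq_mul_sum_poissonWeight_le (hx : 0 ≤ x) {t : ℝ} (ht : 0 ≤ t) {s : Finset ℕ}
    (hs : ∀ k ∈ s, t ≤ |x - k|) : t ^ 2 * ∑ k ∈ s, poissonWeight x k ≤ x :=
  calc t ^ 2 * ∑ k ∈ s, poissonWeight x k
      ≤ ∑ k ∈ s, (x - k) ^ 2 * poissonWeight x k := by
        rw [mul_sum]
        refine sum_le_sum fun k hk => mul_le_mul_of_nonneg_right ?_ (poissonWeight_nonneg hx k)
        rw [← sq_abs (x - k)]
        exact pow_le_pow_left₀ ht (hs k hk) 2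
    _ ≤ x := sum_le_hasSum s (fun k _ => mul_nonneg (sq_nonneg _) (poissonWeight_nonneg hx k))
        (hasSum_sq_sub_mul_poissonWeight x)

lemma summable_poissonWeight_mul (hx : 0 ≤ x) {f : ℕ → ℝ} (hf0 : ∀ k, 0 ≤ f k) {C : ℝ}
    (hfC : ∀ k, f k ≤ C * k) : Summable fun k => poissonWeight x k * f k :=
  .of_nonneg_of_le (fun k => mul_nonneg (poissonWeight_nonneg hx k) (hf0 k))
    (fun k => by
      have := mul_le_mul_of_nonneg_left (hfC k) (poissonWeight_nonneg hx k)
      linarith)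
    ((hasSum_natCast_mul_poissonWeight x).summable.mul_left C)

end Poisson

lemma mul_one_sub_sum_range_le_tsum {p f : ℕ → ℝ} (hp : ∀ k, 0 ≤ p k) (hp1 : HasSum p 1)
    (hf0 : ∀ k, 0 ≤ f k) (hf : Monotone f) (hpf : Summable fun k => p k * f k) (m : ℕ) :
    f m * (1 - ∑ k ∈ range m, p k) ≤ ∑' k, p k * f k := by
  have htail : HasSum (fun k => p (k + m)) (1 - ∑ k ∈ range m, p k) :=
    (hasSum_nat_add_iff' m).mpr hp1
  rw [← hpf.sum_add_tsum_nat_add m, ← htail.tsum_eq, ← tsum_mul_left]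
  refine le_add_of_nonneg_of_le (sum_nonneg fun k _ => mul_nonneg (hp k) (hf0 k)) ?_
  refine htail.summable.mul_left _ |>.tsum_le_tsum (fun k => ?_)
    ((summable_nat_add_iff m).mpr hpf)
  rw [mul_comm]
  exact mul_le_mul_of_nonneg_left (hf (Nat.le_add_left m k)) (hp _)

section Concave

variable {φ : ℕ → ℝ}

lemma natCast_mul_sub_le (hφ0 : φ 0 = 0) (hd : Antitone fun k => φ (k + 1) - φ k) {m j : ℕ}
    (hmj : m ≤ j + 1) : m * (φ (j + 1) - φ j) ≤ φ m := by
  have := card_nsmul_le_sum (range m) (fun k => φ (k + 1) - φ k) (φ (j + 1) - φ j)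
    fun k hk => hd (by rw [mem_range] at hk; omega)
  rwa [sum_range_sub, hφ0, sub_zero, card_range, nsmul_eq_mul] at this

lemma le_natCast_mul_div (hφ0 : φ 0 = 0) (hd : Antitone fun k => φ (k + 1) - φ k) {m n : ℕ}
    (hm : 0 < m) (hmn : m ≤ n) : φ n ≤ n * (φ m / m) := by
  have hm' : (0 : ℝ) < m := by exact_mod_cast hm
  induction n, hmn using Nat.le_induction with
  | base => rw [mul_div_cancel₀ _ hm'.ne']
  | succ n hmn ih =>
    have := natCast_mul_sub_le hφ0 hd (m := m) (j := n) (by omega)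
    rw [← le_div_iff₀' hm'] at this
    push_cast
    linarith

lemma le_natCast_mul_apply_one (hφ0 : φ 0 = 0) (hd : Antitone fun k => φ (k + 1) - φ k)
    (k : ℕ) : φ k ≤ k * φ 1 := by
  rcases k.eq_zero_or_pos with rfl | hk
  · simp [hφ0]
  · simpa using le_natCast_mul_div hφ0 hd one_pos hk

lemma phiExt_le_mul_div (hφ0 : φ 0 = 0) (hd : Antitone fun k => φ (k + 1) - φ k) {m : ℕ}
    (hm : 0 < m) {x : ℝ} (hmx : (m : ℝ) ≤ x) : phiExt φ x ≤ x * (φ m / m) := by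
  have hmn : m ≤ ⌊x⌋₊ := Nat.le_floor hmx
  have hfloor := le_natCast_mul_div hφ0 hd hm hmn
  have hslope : φ (⌊x⌋₊ + 1) - φ ⌊x⌋₊ ≤ φ m / m := by
    rw [le_div_iff₀' (by exact_mod_cast hm)]
    exact natCast_mul_sub_le hφ0 hd (by omega)
  have hfrac : 0 ≤ x - ⌊x⌋₊ := sub_nonneg.2 (Nat.floor_le ((m.cast_nonneg).trans hmx))
  unfold phiExt
  linarith [mul_le_mul_of_nonneg_left hslope hfrac]

lemma apply_floor_le_phiExt (hφ : Monotone φ) {x : ℝ} (hx : 0 ≤ x) : φ ⌊x⌋₊ ≤ phiExt φ x :=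
  le_add_of_nonneg_right <|
    mul_nonneg (sub_nonneg.2 (Nat.floor_le hx)) (sub_nonneg.2 (hφ ⌊x⌋₊.le_succ))

lemma poiExp_nonneg (hφnn : ∀ k, 0 ≤ φ k) {x : ℝ} (hx : 0 ≤ x) : 0 ≤ poiExp φ x :=
  tsum_nonneg fun k => mul_nonneg (poissonWeight_nonneg hx k) (hφnn k)

lemma alphaRatio_nonneg (hφnn : ∀ k, 0 ≤ φ k) (hφ : Monotone φ) {x : ℝ} (hx : 0 ≤ x) :
    0 ≤ alphaRatio φ x := by
  unfold alphaRatio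
  split_ifs
  · exact zero_le_one
  · exact div_nonneg (poiExp_nonneg hφnn hx) ((hφnn _).trans (apply_floor_le_phiExt hφ hx))

lemma natCast_mul_one_sub_div_le_alphaRatio (hφnn : ∀ k, 0 ≤ φ k) (hφ0 : φ 0 = 0)
    (hφ1 : 0 < φ 1) (hφ : Monotone φ) (hd : Antitone fun k => φ (k + 1) - φ k) {m : ℕ}
    (hm : 0 < m) {x : ℝ} (hmx : (m : ℝ) ≤ x) :
    m * (1 - ∑ k ∈ range m, poissonWeight x k) / x ≤ alphaRatio φ x := by
  have hm' : (0 : ℝ) < m := by exact_mod_cast hm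
  have hx : 0 < x := hm'.trans_le hmx
  have hφm : 0 < φ m := hφ1.trans_le (hφ hm)
  have hE : φ m * (1 - ∑ k ∈ range m, poissonWeight x k) ≤ poiExp φ x :=
    mul_one_sub_sum_range_le_tsum (poissonWeight_nonneg hx.le) (hasSum_poissonWeight x) hφnn hφ
      (summable_poissonWeight_mul hx.le hφnn fun k =>
        (le_natCast_mul_apply_one hφ0 hd k).trans_eq (mul_comm _ _)) m
  have hext : 0 < phiExt φ x :=
    hφm.trans_le ((hφ (Nat.le_floor hmx)).trans (apply_floor_le_phiExt hφ hx.le))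
  rw [alphaRatio, if_neg hx.ne']
  calc m * (1 - ∑ k ∈ range m, poissonWeight x k) / x
      = φ m * (1 - ∑ k ∈ range m, poissonWeight x k) / (x * (φ m / m)) := by
        field_simp
    _ ≤ poiExp φ x / (x * (φ m / m)) := div_le_div_of_nonneg_right hE (by positivity)
    _ ≤ poiExp φ x / phiExt φ x :=
        div_le_div_of_nonneg_left (poiExp_nonneg hφnn hx.le) hext
          (phiExt_le_mul_div hφ0 hd hm hmx)

lemma one_sub_two_mul_le_alphaRatio (hφnn : ∀ k, 0 ≤ φ k) (hφ0 : φ 0 = 0)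
    (hφ1 : 0 < φ 1) (hφ : Monotone φ) (hd : Antitone fun k => φ (k + 1) - φ k) {δ x : ℝ}
    (hδ0 : 0 < δ) (hδ1 : δ < 1) (hx : 1 ≤ x * δ ^ 4) : 1 - 2 * δ ≤ alphaRatio φ x := by
  have hx0 : 0 < x := pos_of_mul_pos_left (one_pos.trans_le hx) (by positivity)
  have hxδ : 1 ≤ x * δ := hx.trans (mul_le_mul_of_nonneg_left
    (pow_le_of_le_one hδ0.le hδ1.le (by norm_num)) hx0.le)
  set a := x * (1 - δ)
  have ha0 : 0 ≤ a := mul_nonneg hx0.le (by linarith)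
  set m := ⌊a⌋₊ + 1
  have ham : a < m := by simpa [m] using Nat.lt_floor_add_one a
  have hmx : (m : ℝ) ≤ x := by
    have := Nat.floor_le ha0
    push_cast [m]
    linarith
  have htail : ∑ k ∈ range m, poissonWeight x k ≤ δ ^ 2 := by
    have hcheb := sq_mul_sum_poissonWeight_le hx0.le (t := x * δ) (by positivity) (s := range m)
      fun k hk => by
        have hka : (k : ℝ) ≤ a :=
          (Nat.cast_le.2 (Nat.lt_succ_iff.1 (mem_range.1 hk))).trans (Nat.floor_le ha0)
        exact le_abs.2 (Or.inl (by linarith))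
    have hT0 := sum_nonneg fun k (_ : k ∈ range m) => poissonWeight_nonneg hx0.le k
    have hscaled : x * δ ^ 2 * ∑ k ∈ range m, poissonWeight x k ≤ 1 :=
      le_of_mul_le_mul_left (by linarith) hx0
    linarith [mul_le_mul_of_nonneg_left hx hT0, mul_le_mul_of_nonneg_left hscaled (sq_nonneg δ)]
  calc 1 - 2 * δ ≤ (1 - δ) * (1 - δ ^ 2) := by nlinarith
    _ ≤ m * (1 - ∑ k ∈ range m, poissonWeight x k) / x := by
        rw [le_div_iff₀ hx0]
        have := mul_le_mul ham.le
          (by linarith : 1 - δ ^ 2 ≤ 1 - ∑ k ∈ range m, poissonWeight x k)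
          (by nlinarith) m.cast_nonneg
        linarith
    _ ≤ alphaRatio φ x :=
        natCast_mul_one_sub_div_le_alphaRatio hφnn hφ0 hφ1 hφ hd ⌊a⌋₊.succ_pos hmx

end Concave

/-- For every `ε > 0` and all `x ≥ (6/ε)^4`, `1 - α_φ(x) ≤ ε`. -/
theorem stmt5 (φ : ℕ → ℝ) (hφnn : ∀ k, 0 ≤ φ k) (hφ0 : φ 0 = 0) (hφ1 : φ 1 = 1)
    (hφmono : Monotone φ)
    (hφconc : ∀ k, φ (k + 2) - φ (k + 1) ≤ φ (k + 1) - φ k) :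
    ∀ ε : ℝ, 0 < ε → ∀ x : ℝ, (6 / ε) ^ 4 ≤ x → 1 - alphaRatio φ x ≤ ε := by
  intro ε hε x hx
  rcases le_or_gt 6 ε with hε6 | hε6
  · have := alphaRatio_nonneg hφnn hφmono ((by positivity : (0 : ℝ) ≤ (6 / ε) ^ 4).trans hx)
    linarith
  · have hxδ : 1 ≤ x * (ε / 6) ^ 4 :=
      calc 1 = (6 / ε) ^ 4 * (ε / 6) ^ 4 := by field_simp
        _ ≤ x * (ε / 6) ^ 4 := mul_le_mul_of_nonneg_right hx (by positivity)
    have := one_sub_two_mul_le_alphaRatio hφnn hφ0 (hφ1 ▸ one_pos) hφmono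
      (antitone_nat_of_succ_le hφconc) (by positivity) (by linarith) hxδ
    linarith
end

section
/- For ℓ ∈ ℕ with ℓ ≥ 1 and φ(j) = min{j, ℓ}, the Poisson concavity ratio satisfies α_φ = min_{x ∈ ℕ, x ≥ 1} E[min(Poi(x),ℓ)]/min(x,ℓ) = 1 - ℓ^ℓ e^{-ℓ}/ℓ!, and the minimum is attained at x = ℓ. -/
/-!
Write `N(x) = E[min(Poi(x), ℓ)] = ℓ - e^{-x} T(x)` with `T(x) = ∑_{k<ℓ} (ℓ - k) x^k / k!`,
and `P_n(x) = ∑_{k<n} x^k / k!`. Then `N'(x) = e^{-x} P_ℓ(x) ≥ 0`, so `N(x) / ℓ` increases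
for `x ≥ ℓ`. Moreover `x P_ℓ + T = ℓ P_{ℓ+1} ≤ ℓ e^x`, i.e. `x N'(x) ≤ N(x)`, so `N(x) / x`
decreases for `x > 0`. The two monotone pieces meet at `x = ℓ`, where `T(ℓ) = ℓ ℓ^ℓ / ℓ!`.
-/

open Finset Real
open scoped Nat

noncomputable section

def expPartialSum (n : ℕ) (x : ℝ) : ℝ := ∑ k ∈ range n, x ^ k / k !

/-- `exp (-x) * shortfallSum ℓ x` is `E[(ℓ - Poi(x))⁺]`. -/
def shortfallSum (ℓ : ℕ) (x : ℝ) : ℝ := ∑ k ∈ range ℓ, ((ℓ : ℝ) - k) * x ^ k / k !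

def truncatedPoissonMean (ℓ : ℕ) (x : ℝ) : ℝ := ℓ - exp (-x) * shortfallSum ℓ x

end

lemma expPartialSum_succ (n : ℕ) (x : ℝ) :
    expPartialSum (n + 1) x = expPartialSum n x + x ^ n / n ! :=
  sum_range_succ _ _

lemma shortfallSum_succ (ℓ : ℕ) (x : ℝ) :
    shortfallSum (ℓ + 1) x = shortfallSum ℓ x + expPartialSum (ℓ + 1) x := by
  rw [shortfallSum, shortfallSum, expPartialSum, sum_range_succ, sum_range_succ, ← add_assoc,
    ← sum_add_distrib]
  push_cast
  congr 1
  · exact sum_congr rfl fun k _ => by ring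
  · ring

lemma hasDerivAt_expPartialSum_succ (n : ℕ) (x : ℝ) :
    HasDerivAt (expPartialSum (n + 1)) (expPartialSum n x) x := by
  induction n with
  | zero =>
    have hone : expPartialSum 1 = fun _ => 1 := funext fun y => by simp [expPartialSum]
    simpa [hone, expPartialSum] using hasDerivAt_const x (1 : ℝ)
  | succ n ih =>
    have hsplit : expPartialSum (n + 1 + 1)
        = fun y => expPartialSum (n + 1) y + y ^ (n + 1) / (n + 1)! :=
      funext fun y => expPartialSum_succ _ y
    rw [hsplit]
    refine (ih.add ((hasDerivAt_pow (n + 1) x).div_const _)).congr_deriv ?_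
    rw [expPartialSum_succ, Nat.factorial_succ]
    push_cast
    field_simp

lemma hasDerivAt_shortfallSum (ℓ : ℕ) (x : ℝ) :
    HasDerivAt (shortfallSum ℓ) (shortfallSum ℓ x - expPartialSum ℓ x) x := by
  induction ℓ with
  | zero =>
    have hzero : shortfallSum 0 = fun _ => 0 := funext fun y => by simp [shortfallSum]
    simpa [hzero, expPartialSum] using hasDerivAt_const x (0 : ℝ)
  | succ ℓ ih =>
    rw [funext fun y => shortfallSum_succ ℓ y]
    refine (ih.add (hasDerivAt_expPartialSum_succ ℓ x)).congr_deriv ?_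
    dsimp only
    ring

lemma mul_expPartialSum_add_shortfallSum (ℓ : ℕ) (x : ℝ) :
    x * expPartialSum ℓ x + shortfallSum ℓ x = ℓ * expPartialSum (ℓ + 1) x := by
  induction ℓ with
  | zero => simp [expPartialSum, shortfallSum]
  | succ ℓ ih =>
    rw [shortfallSum_succ, expPartialSum_succ, expPartialSum_succ (ℓ + 1), Nat.factorial_succ]
    rw [expPartialSum_succ] at ih ⊢
    have hfac : (ℓ ! : ℝ) ≠ 0 := by positivity
    push_cast
    field_simp at ih ⊢
    linear_combination ih

lemma shortfallSum_self (ℓ : ℕ) : shortfallSum ℓ ℓ = ℓ * ℓ ^ ℓ / ℓ ! := by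
  have h := mul_expPartialSum_add_shortfallSum ℓ ℓ
  rw [expPartialSum_succ] at h
  linear_combination h

lemma tsum_poisson_mul_min (ℓ : ℕ) (x : ℝ) :
    ∑' k : ℕ, exp (-x) * x ^ k / k ! * min (k : ℝ) ℓ = truncatedPoissonMean ℓ x := by
  have hmass : HasSum (fun k : ℕ => exp (-x) * x ^ k / k ! * ℓ) ℓ := by
    have h := ((NormedSpace.expSeries_div_hasSum_exp x).mul_left (exp (-x))).mul_right (ℓ : ℝ)
    rw [← exp_eq_exp_ℝ, ← exp_add, neg_add_cancel, exp_zero, one_mul] at h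
    simpa only [mul_div_assoc] using h
  have hshortfall_zero :
      ∀ k ∉ range ℓ, exp (-x) * x ^ k / k ! * ((ℓ : ℝ) - min (k : ℝ) ℓ) = 0 := by
    intro k hk
    rw [min_eq_right (by simpa using hk), sub_self, mul_zero]
  have hshortfall : HasSum (fun k : ℕ => exp (-x) * x ^ k / k ! * ((ℓ : ℝ) - min (k : ℝ) ℓ))
      (exp (-x) * shortfallSum ℓ x) := by
    have hfinite : exp (-x) * shortfallSum ℓ x
        = ∑ k ∈ range ℓ, exp (-x) * x ^ k / k ! * ((ℓ : ℝ) - min (k : ℝ) ℓ) := by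
      rw [shortfallSum, mul_sum]
      refine sum_congr rfl fun k hk => ?_
      rw [min_eq_left (by exact_mod_cast (mem_range.mp hk).le)]
      ring
    exact hfinite ▸ hasSum_sum_of_ne_finset_zero hshortfall_zero
  refine ((hmass.sub hshortfall).congr_fun fun k => ?_).tsum_eq
  ring

lemma hasDerivAt_truncatedPoissonMean (ℓ : ℕ) (x : ℝ) :
    HasDerivAt (truncatedPoissonMean ℓ) (exp (-x) * expPartialSum ℓ x) x := by
  refine (((hasDerivAt_neg x).exp.mul (hasDerivAt_shortfallSum ℓ x)).const_sub (ℓ : ℝ)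
    ).congr_deriv ?_
  ring

lemma monotoneOn_truncatedPoissonMean (ℓ : ℕ) :
    MonotoneOn (truncatedPoissonMean ℓ) (Set.Ici 0) := by
  refine monotoneOn_of_hasDerivWithinAt_nonneg (convex_Ici 0)
    (fun x _ => (hasDerivAt_truncatedPoissonMean ℓ x).continuousAt.continuousWithinAt)
    (fun x _ => (hasDerivAt_truncatedPoissonMean ℓ x).hasDerivWithinAt) fun x hx => ?_
  rw [interior_Ici] at hx
  exact mul_nonneg (exp_pos _).le
    (sum_nonneg fun k _ => div_nonneg (pow_nonneg hx.out.le k) (Nat.cast_nonneg _))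

lemma mul_deriv_truncatedPoissonMean_le (ℓ : ℕ) {x : ℝ} (hx : 0 ≤ x) :
    x * (exp (-x) * expPartialSum ℓ x) ≤ truncatedPoissonMean ℓ x := by
  have hgap : truncatedPoissonMean ℓ x - x * (exp (-x) * expPartialSum ℓ x)
      = ℓ * (1 - exp (-x) * expPartialSum (ℓ + 1) x) := by
    rw [truncatedPoissonMean]
    linear_combination -exp (-x) * mul_expPartialSum_add_shortfallSum ℓ x
  have hle_one : exp (-x) * expPartialSum (ℓ + 1) x ≤ 1 :=
    calc exp (-x) * expPartialSum (ℓ + 1) x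
        ≤ exp (-x) * exp x := by gcongr; exact sum_le_exp_of_nonneg hx (ℓ + 1)
      _ = 1 := by rw [← exp_add, neg_add_cancel, exp_zero]
  rw [← sub_nonneg, hgap]
  exact mul_nonneg (Nat.cast_nonneg ℓ) (sub_nonneg.mpr hle_one)

lemma antitoneOn_truncatedPoissonMean_div (ℓ : ℕ) :
    AntitoneOn (fun x => truncatedPoissonMean ℓ x / x) (Set.Ioi 0) := by
  have hderiv : ∀ x ∈ Set.Ioi (0 : ℝ), HasDerivAt (fun x => truncatedPoissonMean ℓ x / x)
      ((exp (-x) * expPartialSum ℓ x * x - truncatedPoissonMean ℓ x * 1) / x ^ 2) x :=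
    fun x hx => (hasDerivAt_truncatedPoissonMean ℓ x).div (hasDerivAt_id x) hx.out.ne'
  refine antitoneOn_of_hasDerivWithinAt_nonpos (convex_Ioi 0)
    (fun x hx => (hderiv x hx).continuousAt.continuousWithinAt)
    (fun x hx => (hderiv x (interior_subset hx)).hasDerivWithinAt) fun x hx => ?_
  rw [interior_Ioi] at hx
  have := mul_deriv_truncatedPoissonMean_le ℓ hx.out.le
  exact div_nonpos_of_nonpos_of_nonneg (by linarith) (sq_nonneg x)

lemma truncatedPoissonMean_self_div {ℓ : ℕ} (hℓ : ℓ ≠ 0) :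
    truncatedPoissonMean ℓ ℓ / ℓ = 1 - (ℓ : ℝ) ^ ℓ * exp (-(ℓ : ℝ)) / ℓ ! := by
  rw [truncatedPoissonMean, shortfallSum_self]
  field_simp

/-- For `φ(j) = min(j, ℓ)`, the Poisson concavity ratio equals `1 - ℓ^ℓ e^{-ℓ} / ℓ!`
and the minimum over positive integers is attained at `x = ℓ`. -/
theorem stmt9 (ℓ : ℕ) (hℓ : 1 ≤ ℓ)
    (f : ℝ → ℝ)
    (hf : ∀ x : ℝ, f x =
      (∑' k : ℕ, Real.exp (-x) * x ^ k / (Nat.factorial k) * min (k : ℝ) (ℓ : ℝ)) /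
        min x (ℓ : ℝ)) :
    IsLeast {y : ℝ | ∃ x : ℕ, 1 ≤ x ∧ y = f x}
        (1 - (ℓ : ℝ) ^ ℓ * Real.exp (-(ℓ : ℝ)) / (Nat.factorial ℓ)) ∧
      f (ℓ : ℝ) = 1 - (ℓ : ℝ) ^ ℓ * Real.exp (-(ℓ : ℝ)) / (Nat.factorial ℓ) := by
  have hf' : ∀ x : ℝ, f x = truncatedPoissonMean ℓ x / min x ℓ := fun x => by
    rw [hf, tsum_poisson_mul_min]
  have hfℓ : f ℓ = 1 - (ℓ : ℝ) ^ ℓ * exp (-(ℓ : ℝ)) / ℓ ! := by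
    rw [hf', min_self, truncatedPoissonMean_self_div (by omega)]
  refine ⟨⟨⟨ℓ, hℓ, hfℓ.symm⟩, ?_⟩, hfℓ⟩
  rintro _ ⟨n, hn, rfl⟩
  rw [← hfℓ, hf', hf', min_self]
  rcases le_total n ℓ with hnℓ | hℓn
  · have hnℓ' : (n : ℝ) ≤ ℓ := by exact_mod_cast hnℓ
    rw [min_eq_left hnℓ']
    exact antitoneOn_truncatedPoissonMean_div ℓ (Set.mem_Ioi.mpr (Nat.cast_pos.mpr (by omega)))
      (Set.mem_Ioi.mpr (Nat.cast_pos.mpr (by omega))) hnℓ'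
  · have hℓn' : (ℓ : ℝ) ≤ n := by exact_mod_cast hℓn
    rw [min_eq_right hℓn']
    exact div_le_div_of_nonneg_right
      (monotoneOn_truncatedPoissonMean ℓ (Set.mem_Ici.mpr (Nat.cast_nonneg ℓ))
        (Set.mem_Ici.mpr (Nat.cast_nonneg n)) hℓn')
      (Nat.cast_nonneg ℓ)
end

section
/- For p ∈ (0,1) and φ(j) = (1-(1-p)^j)/p, the function x ↦ E[φ(Poi(x))]/φ(x) = (1 - e^{-px})/(1 - (1-p)^x) is strictly increasing on [1,∞), and hence α_φ = min_{x ∈ ℕ, x≥1} E[φ(Poi(x))]/φ(x) = (1 - e^{-p})/p. -/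
/-!
Since `E[(1-p)^{Poi x}] = e^{-px}`, the Poisson average of `φ` is `(1 - e^{-px})/p`. Writing
`(1-p)^x = e^{-qx}` with `q = -log (1-p) > p`, the derivative of
`(1 - e^{-px})/(1 - e^{-qx})` has the sign of `p e^{-px} - q e^{-qx} + (q-p) e^{-(p+q)x}`,
which is positive by strict convexity of `exp`, because
`-qx = (p/q)(-px) + (1 - p/q)(-(p+q)x)`. The minimum over `n ≥ 1` is therefore attained at `n = 1`.
-/

open Real Set
open scoped Nat

lemma hasSum_poisson_mul_pow (x r : ℝ) :
    HasSum (fun k : ℕ => exp (-x) * x ^ k / k ! * r ^ k) (exp (-((1 - r) * x))) := by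
  have h := (NormedSpace.expSeries_div_hasSum_exp (r * x)).mul_left (exp (-x))
  rw [← exp_eq_exp_ℝ, ← exp_add, show -x + r * x = -((1 - r) * x) by ring] at h
  have hterm (k : ℕ) : exp (-x) * x ^ k / k ! * r ^ k = exp (-x) * ((r * x) ^ k / k !) := by
    rw [mul_pow]
    ring
  simpa only [hterm] using h

lemma tsum_poisson_mul_one_sub_pow_div (x p : ℝ) :
    ∑' k : ℕ, exp (-x) * x ^ k / k ! * ((1 - (1 - p) ^ k) / p) = (1 - exp (-(p * x))) / p := by
  have h := ((hasSum_poisson_mul_pow x 1).sub (hasSum_poisson_mul_pow x (1 - p))).div_const p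
  convert h.tsum_eq using 1
  · congr 1 with k
    ring
  · norm_num

lemma hasDerivAt_one_sub_exp_neg_mul (c x : ℝ) :
    HasDerivAt (fun y => 1 - exp (-(c * y))) (c * exp (-(c * x))) x :=
  (((hasDerivAt_id' x).const_mul c).neg.exp.const_sub 1).congr_deriv (by rw [Pi.neg_apply]; ring)

/-- Strict convexity of `exp` at `-qx = (p/q)(-px) + (1 - p/q)(-(p+q)x)`. -/
lemma mul_exp_neg_mul_lt {p q x : ℝ} (hp : 0 < p) (hpq : p < q) (hx : 0 < x) :
    q * exp (-(q * x)) < p * exp (-(p * x)) + (q - p) * (exp (-(p * x)) * exp (-(q * x))) := by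
  have hq : 0 < q := hp.trans hpq
  have hne : -(p * x) ≠ -((p + q) * x) := by nlinarith
  have hconv := strictConvexOn_exp.2 (mem_univ _) (mem_univ _) hne (div_pos hp hq)
    (div_pos (sub_pos.2 hpq) hq) (by field_simp; ring)
  have harg : (p / q) • (-(p * x)) + ((q - p) / q) • (-((p + q) * x)) = -(q * x) := by
    simp only [smul_eq_mul]
    field_simp
    ring
  rw [harg, smul_eq_mul, smul_eq_mul] at hconv
  calc q * exp (-(q * x))
      < q * (p / q * exp (-(p * x)) + (q - p) / q * exp (-((p + q) * x))) :=
        mul_lt_mul_of_pos_left hconv hq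
    _ = _ := by
      rw [← exp_add]
      field_simp
      ring_nf

lemma strictMonoOn_one_sub_exp_div_one_sub_exp {p q : ℝ} (hp : 0 < p) (hpq : p < q) :
    StrictMonoOn (fun x => (1 - exp (-(p * x))) / (1 - exp (-(q * x)))) (Ioi 0) := by
  have hden : ∀ x ∈ Ioi (0 : ℝ), 0 < 1 - exp (-(q * x)) := fun x hx =>
    sub_pos.2 (exp_lt_one_iff.2 (by nlinarith [mem_Ioi.1 hx]))
  have hderiv : ∀ x ∈ Ioi (0 : ℝ),
      HasDerivAt (fun x => (1 - exp (-(p * x))) / (1 - exp (-(q * x))))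
        ((p * exp (-(p * x)) * (1 - exp (-(q * x))) - (1 - exp (-(p * x))) * (q * exp (-(q * x))))
          / (1 - exp (-(q * x))) ^ 2) x := fun x hx =>
    (hasDerivAt_one_sub_exp_neg_mul p x).div (hasDerivAt_one_sub_exp_neg_mul q x) (hden x hx).ne'
  refine strictMonoOn_of_deriv_pos (convex_Ioi 0)
    (fun x hx => (hderiv x hx).continuousAt.continuousWithinAt) fun x hx => ?_
  rw [interior_Ioi] at hx
  rw [(hderiv x hx).deriv]
  have hnum := mul_exp_neg_mul_lt hp hpq hx
  exact div_pos (by linarith) (pow_pos (hden x hx) 2)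

lemma strictMonoOn_one_sub_exp_div_one_sub_rpow {p : ℝ} (hp : p ∈ Ioo 0 1) :
    StrictMonoOn (fun x => (1 - exp (-(p * x))) / (1 - (1 - p) ^ x)) (Ioi 0) := by
  have h1p : 0 < 1 - p := sub_pos.2 hp.2
  have hrpow (x : ℝ) : (1 - p) ^ x = exp (-(-log (1 - p) * x)) := by
    rw [rpow_def_of_pos h1p, neg_mul, neg_neg]
  have hlog : p < -log (1 - p) := by
    linarith [log_lt_sub_one_of_pos h1p (by linarith [hp.1] : 1 - p ≠ 1)]
  simp only [hrpow]
  exact strictMonoOn_one_sub_exp_div_one_sub_exp hp.1 hlog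

lemma isLeast_natCast_of_monotoneOn {f : ℝ → ℝ} (hf : MonotoneOn f (Ici 1)) :
    IsLeast {y | ∃ n : ℕ, 1 ≤ n ∧ y = f n} (f 1) := by
  refine ⟨⟨1, le_rfl, by simp⟩, ?_⟩
  rintro y ⟨n, hn, rfl⟩
  have hn : (1 : ℝ) ≤ n := by exact_mod_cast hn
  exact hf self_mem_Ici hn hn

/-- For `p ∈ (0,1)` and `φ(j) = (1-(1-p)^j)/p`: the ratio
`E[φ(Poi x)]/φ(x) = (1-e^{-px})/(1-(1-p)^x)` is strictly increasing on `[1,∞)`, and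
the Poisson concavity ratio is `α_φ = (1 - e^{-p})/p`. -/
theorem stmt10 (p : ℝ) (hp : p ∈ Set.Ioo (0 : ℝ) 1) :
    (∀ x : ℝ, 0 ≤ x →
        (∑' k : ℕ, Real.exp (-x) * x ^ k / (Nat.factorial k) * ((1 - (1 - p) ^ k) / p)) =
          (1 - Real.exp (-(p * x))) / p) ∧
      StrictMonoOn
        (fun x : ℝ => (1 - Real.exp (-(p * x))) / (1 - (1 - p) ^ x)) (Set.Ici 1) ∧
      IsLeast
        {y : ℝ | ∃ n : ℕ, 1 ≤ n ∧
          y = (1 - Real.exp (-(p * n))) / (1 - (1 - p) ^ (n : ℝ))}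
        ((1 - Real.exp (-p)) / p) := by
  have hmono := (strictMonoOn_one_sub_exp_div_one_sub_rpow hp).mono (Ici_subset_Ioi.2 one_pos)
  refine ⟨fun x _ => tsum_poisson_mul_one_sub_pow_div x p, hmono, ?_⟩
  convert isLeast_natCast_of_monotoneOn hmono.monotoneOn using 1
  simp
end

section
/- Let φ : ℕ → ℝ≥0 with φ(0) = 0, φ(1) = 1, nondecreasing and concave, and suppose the increments w_i = φ(i) - φ(i-1) are geometrically dominant: w_i / w_{i+1} ≥ w_{i+1} / w_{i+2} for all i ≥ 1 (with all w_i > 0). Then for all integers k ≥ 1, E[φ(Poi(k))]/φ(k) ≥ E[φ(Poi(1))]/φ(1), i.e. α_φ = α_φ(1). -/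
/-!
Write `w = Δφ`. Log-convexity of `w` together with `w 0 = 1` makes `w` supermultiplicative,
`w a * w b ≤ w (a + b)`, and summing this over `b` gives `φ (a + b) ≥ φ a + w a * φ b`.
Since `Poi(k + 1)` is the sum of independent `Poi(k)` and `Poi(1)`, the expectation
`g k = E[φ(Poi k)]` satisfies `g (k + 1) ≥ g k + E[w(Poi k)] * g 1 ≥ g k + w k * g 1`, the last step
by Jensen (a log-convex sequence is convex, and `Poi k` has mean `k`); summing, `g k ≥ φ k * g 1`.
Expectations are taken in `ℝ≥0∞`, where Fubini needs no integrability; concavity gives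
`φ n ≤ n`, so they are finite.
-/

open MeasureTheory ProbabilityTheory fwdDiff
open scoped NNReal ENNReal

namespace ProbabilityTheory

lemma natCast_add_one_mul_poissonMeasure_singleton (r : ℝ≥0) (n : ℕ) :
    ((n : ℝ≥0∞) + 1) * poissonMeasure r {n + 1} = r * poissonMeasure r {n} := by
  rw [poissonMeasure_singleton, poissonMeasure_singleton, ← ENNReal.ofReal_coe_nnreal,
    ← ENNReal.ofReal_natCast, ← ENNReal.ofReal_one,
    ← ENNReal.ofReal_add (by positivity) zero_le_one, ← ENNReal.ofReal_mul (by positivity),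
    ← ENNReal.ofReal_mul (by positivity)]
  congr 1
  rw [Nat.factorial_succ, Nat.cast_mul, pow_succ]
  push_cast
  field_simp

lemma lintegral_natCast_poissonMeasure (r : ℝ≥0) :
    ∫⁻ n, (n : ℝ≥0∞) ∂poissonMeasure r = r := by
  have total : ∑' n, poissonMeasure r {n} = 1 := by
    simpa using (lintegral_countable' (μ := poissonMeasure r) (fun _ ↦ (1 : ℝ≥0∞))).symm
  rw [lintegral_countable', tsum_eq_zero_add' ENNReal.summable]
  simp only [Nat.cast_zero, zero_mul, zero_add, Nat.cast_succ,
    natCast_add_one_mul_poissonMeasure_singleton, ENNReal.tsum_mul_left, total, mul_one]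

lemma lintegral_poissonMeasure_add (r₁ r₂ : ℝ≥0) (f : ℕ → ℝ≥0∞) :
    ∫⁻ n, f n ∂poissonMeasure (r₁ + r₂) =
      ∫⁻ a, ∫⁻ b, f (a + b) ∂poissonMeasure r₂ ∂poissonMeasure r₁ := by
  rw [← poissonMeasure_conv_poissonMeasure, Measure.lintegral_conv .of_discrete]

lemma tsum_mul_eq_toReal_lintegral_poissonMeasure {φ : ℕ → ℝ} (hφ : 0 ≤ φ) (r : ℝ≥0) :
    ∑' n, Real.exp (-r) * r ^ n / (Nat.factorial n) * φ n =
      (∫⁻ n, ENNReal.ofReal (φ n) ∂poissonMeasure r).toReal := by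
  rw [← integral_eq_lintegral_of_nonneg_ae (.of_forall hφ) .of_discrete, integral_poissonMeasure]
  rfl

end ProbabilityTheory

section LogConvex

variable {w : ℕ → ℝ}

lemma monotone_fwdDiff_of_sq_le (hw : 0 ≤ w) (h : ∀ i, w (i + 1) ^ 2 ≤ w i * w (i + 2)) :
    Monotone (Δ_[1] w) := by
  refine monotone_nat_of_le_succ fun i ↦ ?_
  show w (i + 1) - w i ≤ w (i + 2) - w (i + 1)
  have amgm : 2 * w (i + 1) ≤ w i + w (i + 2) :=
    le_of_sq_le_sq (by nlinarith [h i, sq_nonneg (w i - w (i + 2))])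
      (add_nonneg (hw i) (hw (i + 2)))
  linarith

lemma monotone_succ_div_of_sq_le (hw : ∀ i, 0 < w i) (h : ∀ i, w (i + 1) ^ 2 ≤ w i * w (i + 2)) :
    Monotone fun i ↦ w (i + 1) / w i := by
  refine monotone_nat_of_le_succ fun i ↦ ?_
  rw [div_le_div_iff₀ (hw i) (hw (i + 1))]
  linarith [h i, sq (w (i + 1))]

lemma mul_le_apply_zero_mul_of_sq_le (hw : ∀ i, 0 < w i)
    (h : ∀ i, w (i + 1) ^ 2 ≤ w i * w (i + 2)) (a b : ℕ) : w a * w b ≤ w 0 * w (a + b) := by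
  induction b with
  | zero => rw [mul_comm, add_zero]
  | succ b ih =>
    have ratio : w (b + 1) / w b ≤ w (a + b + 1) / w (a + b) :=
      monotone_succ_div_of_sq_le hw h (Nat.le_add_left b a)
    calc w a * w (b + 1) = w a * w b * (w (b + 1) / w b) := by field_simp [(hw b).ne']
      _ ≤ w 0 * w (a + b) * (w (a + b + 1) / w (a + b)) :=
        mul_le_mul ih ratio (div_nonneg (hw _).le (hw _).le) (mul_nonneg (hw _).le (hw _).le)
      _ = w 0 * w (a + (b + 1)) := by field_simp [(hw (a + b)).ne']; rfl

lemma add_mul_fwdDiff_le_of_monotone (hw : Monotone (Δ_[1] w)) (m n : ℕ) :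
    w m + ((n : ℝ) - m) * Δ_[1] w m ≤ w n := by
  rcases le_total m n with hmn | hnm
  · obtain ⟨k, rfl⟩ := Nat.exists_eq_add_of_le hmn
    induction k with
    | zero => simp
    | succ k ih =>
      have step : Δ_[1] w m ≤ Δ_[1] w (m + k) := hw (Nat.le_add_right m k)
      have hsucc : w (m + (k + 1)) = w (m + k) + Δ_[1] w (m + k) := by
        simp [fwdDiff, ← add_assoc]
      rw [hsucc]
      push_cast at ih ⊢
      linarith [ih (Nat.le_add_right m k)]
  · obtain ⟨k, rfl⟩ := Nat.exists_eq_add_of_le hnm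
    induction k with
    | zero => simp
    | succ k ih =>
      have step : Δ_[1] w (n + k) ≤ Δ_[1] w (n + (k + 1)) := hw (by omega)
      have hsucc : w (n + (k + 1)) = w (n + k) + Δ_[1] w (n + k) := by
        simp [fwdDiff, ← add_assoc]
      rw [hsucc]
      push_cast at ih ⊢
      nlinarith [ih (Nat.le_add_right n k)]

lemma ofReal_le_lintegral_of_monotone_fwdDiff {P : Measure ℕ} [IsProbabilityMeasure P] {m : ℕ}
    (hP : ∫⁻ n, (n : ℝ≥0∞) ∂P = m) (hw : 0 ≤ w) (hanti : Antitone w)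
    (hconv : Monotone (Δ_[1] w)) :
    ENNReal.ofReal (w m) ≤ ∫⁻ n, ENNReal.ofReal (w n) ∂P := by
  set d := w m - w (m + 1)
  have hd : 0 ≤ d := sub_nonneg.mpr (hanti m.le_succ)
  have tangent (n : ℕ) : w m + d * m ≤ w n + d * n := by
    have := add_mul_fwdDiff_le_of_monotone hconv m n
    simp only [fwdDiff] at this
    linear_combination this
  have split (n : ℕ) :
      ENNReal.ofReal (w n + d * n) = ENNReal.ofReal (w n) + ENNReal.ofReal d * n := by
    rw [ENNReal.ofReal_add (hw n) (by positivity), ENNReal.ofReal_mul hd, ENNReal.ofReal_natCast]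
  have hfin : ENNReal.ofReal d * m ≠ ⊤ :=
    ENNReal.mul_ne_top ENNReal.ofReal_ne_top (ENNReal.natCast_ne_top m)
  refine (ENNReal.add_le_add_iff_right hfin).mp ?_
  calc ENNReal.ofReal (w m) + ENNReal.ofReal d * m
      = ∫⁻ _, ENNReal.ofReal (w m + d * m) ∂P := by simp [split]
    _ ≤ ∫⁻ n, ENNReal.ofReal (w n + d * n) ∂P :=
        lintegral_mono fun n ↦ ENNReal.ofReal_le_ofReal (tangent n)
    _ = ∫⁻ n, ENNReal.ofReal (w n) ∂P + ENNReal.ofReal d * m := by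
        simp only [split]
        rw [lintegral_add_left .of_discrete, lintegral_const_mul _ .of_discrete, hP]

end LogConvex

section Superadditive

variable {φ : ℕ → ℝ}

lemma add_fwdDiff_mul_le_of_mul_le (hφ0 : φ 0 = 0) {a : ℕ}
    (h : ∀ b, Δ_[1] φ a * Δ_[1] φ b ≤ Δ_[1] φ (a + b)) (b : ℕ) :
    φ a + Δ_[1] φ a * φ b ≤ φ (a + b) := by
  induction b with
  | zero => simp [hφ0]
  | succ b ih =>
    have hsucc (n : ℕ) : φ (n + 1) = φ n + Δ_[1] φ n := by simp [fwdDiff]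
    rw [← add_assoc, hsucc, hsucc, mul_add]
    linarith [h b]

lemma le_natCast_of_fwdDiff_le_one (hφ0 : φ 0 = 0) (h : ∀ i, Δ_[1] φ i ≤ 1) (n : ℕ) :
    φ n ≤ n := by
  induction n with
  | zero => simp [hφ0]
  | succ n ih =>
    have hsucc : φ (n + 1) = φ n + Δ_[1] φ n := by simp [fwdDiff]
    push_cast
    linarith [h n]

end Superadditive

section PoissonExpectation

variable {φ : ℕ → ℝ}

lemma lintegral_poissonMeasure_add_ge (hφ : 0 ≤ φ) (hΔ : 0 ≤ Δ_[1] φ)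
    (hsup : ∀ a b, φ a + Δ_[1] φ a * φ b ≤ φ (a + b)) (r s : ℝ≥0) :
    ∫⁻ n, ENNReal.ofReal (φ n) ∂poissonMeasure r +
        (∫⁻ n, ENNReal.ofReal (Δ_[1] φ n) ∂poissonMeasure r) *
          ∫⁻ n, ENNReal.ofReal (φ n) ∂poissonMeasure s ≤
      ∫⁻ n, ENNReal.ofReal (φ n) ∂poissonMeasure (r + s) := by
  set G := ∫⁻ n, ENNReal.ofReal (φ n) ∂poissonMeasure s
  have inner (a : ℕ) : ENNReal.ofReal (φ a) + ENNReal.ofReal (Δ_[1] φ a) * G =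
      ∫⁻ b, ENNReal.ofReal (φ a) + ENNReal.ofReal (Δ_[1] φ a) * ENNReal.ofReal (φ b)
        ∂poissonMeasure s := by
    rw [lintegral_add_left .of_discrete, lintegral_const, measure_univ, mul_one,
      lintegral_const_mul _ .of_discrete]
  calc _ = ∫⁻ a, ENNReal.ofReal (φ a) + ENNReal.ofReal (Δ_[1] φ a) * G ∂poissonMeasure r := by
        rw [lintegral_add_left .of_discrete, lintegral_mul_const _ .of_discrete]
    _ ≤ ∫⁻ a, ∫⁻ b, ENNReal.ofReal (φ (a + b)) ∂poissonMeasure s ∂poissonMeasure r := by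
        refine lintegral_mono fun a ↦ (inner a).le.trans (lintegral_mono fun b ↦ ?_)
        rw [← ENNReal.ofReal_mul (hΔ a), ← ENNReal.ofReal_add (hφ a) (mul_nonneg (hΔ a) (hφ b))]
        exact ENNReal.ofReal_le_ofReal (hsup a b)
    _ = _ := (lintegral_poissonMeasure_add r s fun n ↦ ENNReal.ofReal (φ n)).symm

lemma lintegral_ofReal_poissonMeasure_ne_top (hφ : ∀ n, φ n ≤ n) (k : ℕ) :
    ∫⁻ n, ENNReal.ofReal (φ n) ∂poissonMeasure k ≠ ⊤ := by
  refine ne_top_of_le_ne_top (ENNReal.natCast_ne_top k) ?_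
  calc _ ≤ ∫⁻ n, (n : ℝ≥0∞) ∂poissonMeasure k :=
        lintegral_mono fun n ↦ by simpa using ENNReal.ofReal_le_ofReal (hφ n)
    _ = k := by simpa using lintegral_natCast_poissonMeasure k

lemma ofReal_mul_lintegral_poissonMeasure_one_le (hφ : 0 ≤ φ) (hφ0 : φ 0 = 0)
    (hΔ : 0 ≤ Δ_[1] φ) (hsup : ∀ a b, φ a + Δ_[1] φ a * φ b ≤ φ (a + b))
    (hjensen : ∀ m : ℕ, ENNReal.ofReal (Δ_[1] φ m) ≤
      ∫⁻ n, ENNReal.ofReal (Δ_[1] φ n) ∂poissonMeasure m) (k : ℕ) :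
    ENNReal.ofReal (φ k) * ∫⁻ n, ENNReal.ofReal (φ n) ∂poissonMeasure 1 ≤
      ∫⁻ n, ENNReal.ofReal (φ n) ∂poissonMeasure k := by
  induction k with
  | zero => simp [hφ0]
  | succ k ih =>
    have hsucc : φ (k + 1) = φ k + Δ_[1] φ k := by simp [fwdDiff]
    rw [hsucc, ENNReal.ofReal_add (hφ k) (hΔ k), add_mul, Nat.cast_succ]
    exact (add_le_add ih (mul_le_mul_left (hjensen k) _)).trans
      (lintegral_poissonMeasure_add_ge hφ hΔ hsup k 1)

end PoissonExpectation

/-- If the increments `w_i = φ(i) - φ(i-1)` are positive and geometrically dominant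
(`w_i w_{i+2} ≥ w_{i+1}²`), then `α_φ(k) ≥ α_φ(1)` for all integers `k ≥ 1`,
i.e. `α_φ = α_φ(1)`. -/
theorem stmt14 (φ : ℕ → ℝ) (hφnn : ∀ k, 0 ≤ φ k) (hφ0 : φ 0 = 0) (hφ1 : φ 1 = 1)
    (hφmono : Monotone φ)
    (hφconc : ∀ k, φ (k + 2) - φ (k + 1) ≤ φ (k + 1) - φ k)
    (hpos : ∀ i : ℕ, 0 < φ (i + 1) - φ i)
    (hgeo : ∀ i : ℕ, (φ (i + 2) - φ (i + 1)) ^ 2 ≤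
      (φ (i + 1) - φ i) * (φ (i + 3) - φ (i + 2))) :
    ∀ k : ℕ, 1 ≤ k →
      (∑' j : ℕ, Real.exp (-(1 : ℝ)) * (1 : ℝ) ^ j / (Nat.factorial j) * φ j) / φ 1 ≤
        (∑' j : ℕ, Real.exp (-(k : ℝ)) * (k : ℝ) ^ j / (Nat.factorial j) * φ j) / φ k := by
  intro k hk
  have hΔnn : 0 ≤ Δ_[1] φ := fun i ↦ (hpos i).le
  have hΔanti : Antitone (Δ_[1] φ) := antitone_nat_of_succ_le hφconc
  have hΔ0 : Δ_[1] φ 0 = 1 := by simp [fwdDiff, hφ0, hφ1]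
  have hsup (a b : ℕ) : φ a + Δ_[1] φ a * φ b ≤ φ (a + b) :=
    add_fwdDiff_mul_le_of_mul_le hφ0 (fun b ↦ by
      simpa [hΔ0] using mul_le_apply_zero_mul_of_sq_le (w := Δ_[1] φ) hpos hgeo a b) b
  have hjensen (m : ℕ) := ofReal_le_lintegral_of_monotone_fwdDiff
    (by simpa using lintegral_natCast_poissonMeasure m) hΔnn hΔanti
    (monotone_fwdDiff_of_sq_le hΔnn hgeo)
  have key := ofReal_mul_lintegral_poissonMeasure_one_le hφnn hφ0 hΔnn hsup hjensen k
  have hfin := lintegral_ofReal_poissonMeasure_ne_top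
    (le_natCast_of_fwdDiff_le_one hφ0 fun i ↦ hΔ0 ▸ hΔanti i.zero_le) k
  have hreal (r : ℕ) := tsum_mul_eq_toReal_lintegral_poissonMeasure hφnn r
  simp only [NNReal.coe_natCast] at hreal
  rw [hφ1, div_one, le_div_iff₀ ((zero_lt_one.trans_le hφ1.ge).trans_le (hφmono hk)),
    hreal k, ← Nat.cast_one, hreal 1, Nat.cast_one, mul_comm, ← ENNReal.toReal_ofReal (hφnn k),
    ← ENNReal.toReal_mul]
  exact ENNReal.toReal_mono hfin key
end
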